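/- arXiv:1303.4733 — 8 statements merged into one kernel-verified Lean document; each statement's English description precedes it below -/
import Mathlib

section
/- Let X be a convex subset of a uniformly convex real normed space, and let P, A ⊆ X be nonempty subsets with d(P, A) := inf{‖p − a‖ : p ∈ P, a ∈ A} > 0. Then the boundary of the dominance region dom(P, A) with respect to the subspace topology on X equals the bisector: ∂(dom(P, A)) = {x ∈ X : d(x, P) = d(x, A)}. -/
set_option maxHeartbeats 1000000

open Metric

/-- Quantitative uniform convexity step: if `v` has norm at least `r`, `w` has norm at most
`r + ε`, and `v - t • w` has norm at most `(1-t)(r+ε) + ε` for small enough `ε`, then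
`v` and `w` are within `s` of each other. -/
lemma key_unif_convex {E : Type*} [NormedAddCommGroup E] [NormedSpace ℝ E]
    [UniformConvexSpace E] {s r t : ℝ} (hs : 0 < s) (hr : s / 2 ≤ r)
    (ht0 : 0 < t) (ht1 : t ≤ 1 / 2) :
    ∃ ε > 0, ∀ v w : E, ‖w‖ ≤ r + ε → r ≤ ‖v‖ →
      ‖v - t • w‖ ≤ (1 - t) * (r + ε) + ε → ‖v - w‖ < s := by
  have hr0 : 0 < r := lt_of_lt_of_le (by linarith) hr
  have hε0 : (0:ℝ) < s / (2 * (r + 1)) := by positivity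
  obtain ⟨δ, hδ, hucv⟩ := exists_forall_closed_ball_dist_add_le_two_sub E hε0
  obtain ⟨ε, hε_pos, hε1, hε2, hε3⟩ :
      ∃ ε : ℝ, 0 < ε ∧ ε ≤ s / 4 ∧ ε ≤ 1/2 ∧ ε ≤ δ * t * r / 4 :=
    ⟨min (s / 4) (min (1/2) (δ * t * r / 4)), by positivity, min_le_left _ _,
      le_trans (min_le_right _ _) (min_le_left _ _),
      le_trans (min_le_right _ _) (min_le_right _ _)⟩
  refine ⟨ε, hε_pos, fun v w hw hv hvt => ?_⟩
  set R2 : ℝ := (1 - t) * (r + ε) + ε with hR2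
  clear_value R2
  have hR2pos : 0 < R2 := by nlinarith
  set X1 : E := (r + ε)⁻¹ • w with hX1
  set X2 : E := R2⁻¹ • (v - t • w) with hX2
  clear_value X1 X2
  have hX1n : ‖X1‖ ≤ 1 := by
    rw [hX1, norm_smul, Real.norm_eq_abs, abs_inv, abs_of_pos (by positivity)]
    rw [inv_mul_le_iff₀ (by positivity)]; linarith
  have hX2n : ‖X2‖ ≤ 1 := by
    rw [hX2, norm_smul, Real.norm_eq_abs, abs_inv, abs_of_pos hR2pos]
    rw [inv_mul_le_iff₀ hR2pos]; linarith
  have hsum : v = (t * (r + ε)) • X1 + R2 • X2 := by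
    rw [hX1, hX2, smul_smul, smul_smul]
    rw [mul_inv_cancel₀ (ne_of_gt hR2pos)]
    rw [show t * (r + ε) * (r + ε)⁻¹ = t by field_simp]
    simp
  have hm : t * r ≤ t * (r + ε) := by nlinarith
  have hm2 : t * r ≤ R2 := by nlinarith
  have hnorm_sum : 2 - 2 * ε / (t * r) ≤ ‖X1 + X2‖ := by
    have hd : (t * (r + ε)) • X1 + R2 • X2 =
        (t * r) • (X1 + X2) + (t * (r + ε) - t * r) • X1 + (R2 - t * r) • X2 := by
      module
    have h1 : ‖v‖ ≤ (t * r) * ‖X1 + X2‖ + (t * (r + ε) - t * r) + (R2 - t * r) := by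
      rw [hsum, hd]
      refine le_trans (norm_add₃_le) ?_
      gcongr
      · rw [norm_smul, Real.norm_eq_abs, abs_of_pos (by positivity)]
      · calc ‖(t * (r + ε) - t * r) • X1‖ = (t * (r + ε) - t * r) * ‖X1‖ := by
              rw [norm_smul, Real.norm_eq_abs, abs_of_nonneg (by linarith)]
            _ ≤ (t * (r + ε) - t * r) * 1 := by nlinarith [norm_nonneg X1]
            _ = _ := mul_one _
      · calc ‖(R2 - t * r) • X2‖ = (R2 - t * r) * ‖X2‖ := by
              rw [norm_smul, Real.norm_eq_abs, abs_of_nonneg (by linarith)]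
            _ ≤ (R2 - t * r) * 1 := by nlinarith [norm_nonneg X2]
            _ = _ := mul_one _
    have htr : 0 < t * r := by positivity
    have h2 : (t * r) * ‖X1 + X2‖ ≥ 2 * (t * r) - 2 * ε := by nlinarith
    have hq : 2 * ε / (t * r) * (t * r) = 2 * ε := div_mul_cancel₀ _ (ne_of_gt htr)
    nlinarith [h2, hq, htr]
  have hclose : ‖X1 - X2‖ < s / (2 * (r + 1)) := by
    by_contra hcon
    push_neg at hcon
    have h5 := hucv hX1n hX2n hcon
    have htr : 0 < t * r := by positivity
    have h6 : 2 * ε / (t * r) < δ := by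
      rw [div_lt_iff₀ htr]; nlinarith
    linarith [hnorm_sum]
  have hvw : v - w = R2 • (X2 - X1) + ε • X1 := by
    have hw' : w = (r + ε) • X1 := by
      rw [hX1, smul_smul, mul_inv_cancel₀ (by positivity), one_smul]
    rw [hsum, hw', hR2]
    module
  calc ‖v - w‖ = ‖R2 • (X2 - X1) + ε • X1‖ := by rw [hvw]
    _ ≤ R2 * ‖X2 - X1‖ + ε * ‖X1‖ := by
        refine le_trans (norm_add_le _ _) ?_
        gcongr <;> rw [norm_smul, Real.norm_eq_abs]
        · rw [abs_of_pos hR2pos]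
        · rw [abs_of_pos hε_pos]
    _ < s := by
        have h1 : ‖X2 - X1‖ < s / (2 * (r + 1)) := by rwa [norm_sub_rev] at hclose
        have h2 : R2 ≤ r + 1 := by nlinarith
        have h3 : R2 * ‖X2 - X1‖ ≤ (r + 1) * (s / (2 * (r+1))) := by
          apply mul_le_mul h2 (le_of_lt h1) (norm_nonneg _) (by positivity)
        have h4 : (r + 1) * (s / (2 * (r+1))) = s / 2 := by field_simp
        nlinarith [norm_nonneg X1, mul_le_mul_of_nonneg_left hX1n (le_of_lt hε_pos)]

/-- Main theorem (boundary version): for a convex subset `X` of a uniformly convex real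
normed space and nonempty positively separated sites `P, A ⊆ X`, the boundary (in the
subspace topology on `X`) of the dominance region `dom(P,A)` equals the bisector. -/
theorem frontier_dom_eq_bisector
    {E : Type*} [NormedAddCommGroup E] [NormedSpace ℝ E] [UniformConvexSpace E]
    (X : Set E) (hX : Convex ℝ X) (P A : Set E)
    (hP : P.Nonempty) (hA : A.Nonempty) (hPX : P ⊆ X) (hAX : A ⊆ X)
    (hsep : 0 < sInf {r : ℝ | ∃ p ∈ P, ∃ a ∈ A, r = dist p a}) :
    frontier {x : X | Metric.infDist (x : E) P ≤ Metric.infDist (x : E) A}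
      = {x : X | Metric.infDist (x : E) P = Metric.infDist (x : E) A} := by
  set s := sInf {r : ℝ | ∃ p ∈ P, ∃ a ∈ A, r = dist p a} with hsdef
  have hlb : ∀ p ∈ P, ∀ a ∈ A, s ≤ dist p a := by
    intro p hp a ha
    refine csInf_le ⟨0, ?_⟩ ⟨p, hp, a, ha, rfl⟩
    rintro r ⟨p', _, a', _, rfl⟩
    exact dist_nonneg
  have hf : Continuous fun x : X => Metric.infDist (x : E) P :=
    (Metric.continuous_infDist_pt P).comp continuous_subtype_val
  have hg : Continuous fun x : X => Metric.infDist (x : E) A :=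
    (Metric.continuous_infDist_pt A).comp continuous_subtype_val
  have hclosed : IsClosed {x : X | Metric.infDist (x : E) P ≤ Metric.infDist (x : E) A} :=
    isClosed_le hf hg
  ext x
  simp only [Set.mem_setOf_eq]
  rw [hclosed.frontier_eq, Set.mem_diff]
  constructor
  · rintro ⟨hle, hnint⟩
    by_contra hne
    have hlt : Metric.infDist (x : E) P < Metric.infDist (x : E) A := lt_of_le_of_ne hle hne
    have hopen : IsOpen {y : ↥X | Metric.infDist (y : E) P < Metric.infDist (y : E) A} :=
      isOpen_lt hf hg
    have hsub : {y : ↥X | Metric.infDist (y : E) P < Metric.infDist (y : E) A} ⊆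
        {y : ↥X | Metric.infDist (y : E) P ≤ Metric.infDist (y : E) A} :=
      Set.setOf_subset_setOf.mpr fun y hy => le_of_lt hy
    exact hnint <| mem_interior_iff_mem_nhds.2 <|
      Filter.mem_of_superset (hopen.mem_nhds hlt) hsub
  · intro heq
    refine ⟨le_of_eq heq, fun hint => ?_⟩
    obtain ⟨δ, hδ, hball⟩ := Metric.mem_nhds_iff.mp (mem_interior_iff_mem_nhds.mp hint)
    set r := Metric.infDist (x : E) A with hrdef
    have hfg : s ≤ Metric.infDist (x : E) P + Metric.infDist (x : E) A := by
      by_contra hcon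
      push_neg at hcon
      obtain ⟨p, hp, hxp⟩ := (Metric.infDist_lt_iff hP).mp
        (show Metric.infDist (x : E) P < s - Metric.infDist (x : E) A by linarith)
      obtain ⟨a, ha, hxa⟩ := (Metric.infDist_lt_iff hA).mp
        (show Metric.infDist (x : E) A < s - dist (x : E) p by linarith)
      have := hlb p hp a ha
      have htri : dist p a ≤ dist p (x : E) + dist (x : E) a := dist_triangle _ _ _
      rw [dist_comm p (x : E)] at htri
      linarith
    have hr : s / 2 ≤ r := by
      rw [hrdef] at heq ⊢
      linarith
    have hr0 : 0 < r := lt_of_lt_of_le (by linarith) hr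
    set t := min (1/2 : ℝ) (δ / (2 * (r + 1))) with htdef
    have ht0 : 0 < t := lt_min one_half_pos (by positivity)
    have ht1 : t ≤ 1/2 := min_le_left _ _
    have htδ : t * (r + 1) ≤ δ / 2 := by
      calc t * (r + 1) ≤ (δ / (2 * (r + 1))) * (r + 1) := by
            have := min_le_right (1/2 : ℝ) (δ / (2 * (r + 1)))
            nlinarith
        _ = δ / 2 := by field_simp
    clear_value t
    obtain ⟨ε₀, hε₀, hkey⟩ := key_unif_convex (E := E) hsep hr ht0 ht1
    obtain ⟨ε, hε, hεa, hεb⟩ : ∃ ε : ℝ, 0 < ε ∧ ε ≤ ε₀ ∧ ε ≤ 1/2 :=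
      ⟨min ε₀ (1/2), lt_min hε₀ one_half_pos, min_le_left _ _, min_le_right _ _⟩
    obtain ⟨a, ha, hxa⟩ := (Metric.infDist_lt_iff hA).mp
      (show Metric.infDist (x : E) A < r + ε by rw [← hrdef]; linarith)
    have haX : a ∈ X := hAX ha
    have hyX : (1 - t) • (x : E) + t • a ∈ X :=
      hX x.2 haX (by linarith) (le_of_lt ht0) (by ring)
    set y : E := (1 - t) • (x : E) + t • a with hydef
    have hyX' : y ∈ X := hyX
    clear_value y
    have hax_norm : ‖a - (x : E)‖ < r + ε := by
      rw [← dist_eq_norm, dist_comm]; exact hxa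
    have hyball : (⟨y, hyX'⟩ : X) ∈ Metric.ball x δ := by
      rw [Metric.mem_ball, Subtype.dist_eq, dist_eq_norm]
      have h1 : y - (x : E) = t • (a - (x : E)) := by rw [hydef]; module
      rw [h1, norm_smul, Real.norm_eq_abs, abs_of_pos ht0]
      have : t * ‖a - (x : E)‖ ≤ t * (r + 1) := by nlinarith [norm_nonneg (a - (x : E))]
      linarith
    have hyS : Metric.infDist y P ≤ Metric.infDist y A := hball hyball
    have hgy : Metric.infDist y A ≤ (1 - t) * (r + ε) := by
      refine le_trans (Metric.infDist_le_dist_of_mem ha) ?_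
      rw [dist_eq_norm]
      have h1 : y - a = (1 - t) • ((x : E) - a) := by rw [hydef]; module
      rw [h1, norm_smul, Real.norm_eq_abs, abs_of_nonneg (by linarith)]
      have h2 : ‖(x : E) - a‖ < r + ε := by rw [← dist_eq_norm]; exact hxa
      nlinarith
    obtain ⟨p, hp, hyp⟩ := (Metric.infDist_lt_iff hP).mp
      (show Metric.infDist y P < Metric.infDist y P + ε by linarith)
    have h1 : ‖a - (x : E)‖ ≤ r + ε₀ := by linarith
    have h2 : r ≤ ‖p - (x : E)‖ := by
      rw [← dist_eq_norm, dist_comm]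
      calc r = Metric.infDist (x : E) P := by rw [hrdef, heq]
        _ ≤ dist (x : E) p := Metric.infDist_le_dist_of_mem hp
    have h3 : ‖(p - (x : E)) - t • (a - (x : E))‖ ≤ (1 - t) * (r + ε₀) + ε₀ := by
      have he : (p - (x : E)) - t • (a - (x : E)) = p - y := by rw [hydef]; module
      rw [he, ← dist_eq_norm, dist_comm]
      have : dist y p < (1 - t) * (r + ε) + ε := by linarith
      nlinarith [this]
    have hfinal := hkey (p - (x : E)) (a - (x : E)) h1 h2 h3
    have he2 : (p - (x : E)) - (a - (x : E)) = p - a := by module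
    rw [he2, ← dist_eq_norm] at hfinal
    exact absurd (hlb p hp a ha) (not_le.mpr hfinal)
end

section
/- Let X be a convex subset of a uniformly convex real normed space, and let P, A ⊆ X be nonempty subsets with d(P, A) := inf{‖p − a‖ : p ∈ P, a ∈ A} > 0. Then the interior of the dominance region dom(P, A) with respect to the subspace topology on X equals the set of strict inequality: Int(dom(P, A)) = {x ∈ X : d(x, P) < d(x, A)}. -/
open Metric

private lemma key_aux {E : Type*} [NormedAddCommGroup E] [NormedSpace ℝ E]
    [UniformConvexSpace E] {ε : ℝ} (hε : 0 < ε) :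
    ∃ δ > (0:ℝ), ∀ u v : E, u ≠ 0 → v ≠ 0 → ‖u‖ ≤ ‖v‖ →
      ‖u‖ + ‖v‖ - δ * ‖u‖ ≤ ‖u + v‖ → ‖‖u‖⁻¹ • u - ‖v‖⁻¹ • v‖ < ε := by
  obtain ⟨δ, hδ, H⟩ := exists_forall_closed_ball_dist_add_le_two_sub E hε
  refine ⟨δ/2, by positivity, fun u v hu hv huv hineq => ?_⟩
  by_contra h
  push_neg at h
  have hu0 : (0:ℝ) < ‖u‖ := norm_pos_iff.mpr hu
  have hv0 : (0:ℝ) < ‖v‖ := norm_pos_iff.mpr hv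
  have hnu : ‖‖u‖⁻¹ • u‖ = 1 := norm_smul_inv_norm (𝕜 := ℝ) hu
  have hnv : ‖‖v‖⁻¹ • v‖ = 1 := norm_smul_inv_norm (𝕜 := ℝ) hv
  have h2 : ‖‖u‖⁻¹ • u + ‖v‖⁻¹ • v‖ ≤ 2 - δ := H hnu.le hnv.le h
  have e1 : ‖u‖ • (‖u‖⁻¹ • u) = u := smul_inv_smul₀ hu0.ne' u
  have e2 : ‖v‖ • (‖v‖⁻¹ • v) = v := smul_inv_smul₀ hv0.ne' v
  have expand : u + v = ‖u‖ • (‖u‖⁻¹ • u + ‖v‖⁻¹ • v) + (‖v‖ - ‖u‖) • (‖v‖⁻¹ • v) := by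
    rw [smul_add, sub_smul, e1, e2]; abel
  have hub : ‖u + v‖ ≤ ‖u‖ * ‖‖u‖⁻¹ • u + ‖v‖⁻¹ • v‖ + (‖v‖ - ‖u‖) := by
    rw [expand]
    refine (norm_add_le _ _).trans ?_
    rw [norm_smul, norm_smul, Real.norm_of_nonneg (norm_nonneg u),
      Real.norm_of_nonneg (sub_nonneg.2 huv), hnv, mul_one]
  nlinarith [norm_nonneg (‖u‖⁻¹ • u + ‖v‖⁻¹ • v)]

private lemma key {E : Type*} [NormedAddCommGroup E] [NormedSpace ℝ E]
    [UniformConvexSpace E] {ε : ℝ} (hε : 0 < ε) :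
    ∃ δ > (0:ℝ), ∀ u v : E, u ≠ 0 → v ≠ 0 →
      ‖u‖ + ‖v‖ - δ * min ‖u‖ ‖v‖ ≤ ‖u + v‖ → ‖‖u‖⁻¹ • u - ‖v‖⁻¹ • v‖ < ε := by
  obtain ⟨δ, hδ, H⟩ := key_aux (E := E) hε
  refine ⟨δ, hδ, fun u v hu hv hineq => ?_⟩
  rcases le_total ‖u‖ ‖v‖ with h | h
  · exact H u v hu hv h (by rwa [min_eq_left h] at hineq)
  · rw [norm_sub_rev]
    refine H v u hv hu h ?_
    rw [add_comm v u]
    rw [min_eq_right h] at hineq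
    linarith

set_option maxHeartbeats 1000000 in
/-- Main theorem (interior version): for a convex subset `X` of a uniformly convex real
normed space and nonempty positively separated sites `P, A ⊆ X`, the interior (in the
subspace topology on `X`) of the dominance region `dom(P,A)` equals the set of strict
inequality. -/
theorem interior_dom_eq_strict
    {E : Type*} [NormedAddCommGroup E] [NormedSpace ℝ E] [UniformConvexSpace E]
    (X : Set E) (hX : Convex ℝ X) (P A : Set E)
    (hP : P.Nonempty) (hA : A.Nonempty) (hPX : P ⊆ X) (hAX : A ⊆ X)
    (hsep : 0 < sInf {r : ℝ | ∃ p ∈ P, ∃ a ∈ A, r = dist p a}) :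
    interior {x : X | Metric.infDist (x : E) P ≤ Metric.infDist (x : E) A}
      = {x : X | Metric.infDist (x : E) P < Metric.infDist (x : E) A} := by
  set ε0 := sInf {r : ℝ | ∃ p ∈ P, ∃ a ∈ A, r = dist p a} with hε0def
  clear_value ε0
  have hPA : ∀ p ∈ P, ∀ a ∈ A, ε0 ≤ dist p a := by
    intro p hp a ha
    rw [hε0def]
    exact csInf_le ⟨0, by rintro r ⟨p', _, a', _, rfl⟩; exact dist_nonneg⟩
      ⟨p, hp, a, ha, rfl⟩
  apply Set.Subset.antisymm
  · intro x hx
    have hle : infDist (x:E) P ≤ infDist (x:E) A := by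
      have h := interior_subset hx; exact h
    refine lt_of_le_of_ne hle fun heq => ?_
    set r := infDist (x:E) A with hrdef
    clear_value r
    -- r > 0
    have hrpos : 0 < r := by
      rcases lt_or_ge 0 r with h | h
      · exact h
      have hr0 : r = 0 := le_antisymm h (by rw [hrdef]; exact Metric.infDist_nonneg)
      obtain ⟨p, hp, hxp⟩ := (Metric.infDist_lt_iff hP).mp
        (show infDist (x:E) P < ε0/3 by rw [heq, hr0]; positivity)
      obtain ⟨a, ha, hxa⟩ := (Metric.infDist_lt_iff hA).mp
        (show infDist (x:E) A < ε0/3 by rw [← hrdef, hr0]; positivity)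
      have := hPA p hp a ha
      have : dist p a ≤ dist p (x:E) + dist (x:E) a := dist_triangle _ _ _
      rw [dist_comm p (x:E)] at this
      linarith [hPA p hp a ha]
    -- interior ball
    obtain ⟨δ, hδpos, hball⟩ := Metric.isOpen_iff.mp isOpen_interior x hx
    have hdom : ∀ y : X, dist y x < δ → infDist (y:E) P ≤ infDist (y:E) A := by
      intro y hy; have h := interior_subset (hball hy); exact h
    set t := min (1/2 : ℝ) (δ/(2*(r+1))) with htdef
    clear_value t
    have ht0 : 0 < t := by rw [htdef]; exact lt_min (by norm_num) (by positivity)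
    have hthalf : t ≤ 1/2 := by rw [htdef]; exact min_le_left _ _
    have htδ : t ≤ δ/(2*(r+1)) := by rw [htdef]; exact min_le_right _ _
    obtain ⟨δ', hδ'pos, hkey⟩ := key (E := E) (ε := ε0/(2*(r+1))) (by positivity)
    set m := min (t*r) (r/4) with hmdef
    clear_value m
    have hmpos : 0 < m := by rw [hmdef]; exact lt_min (by positivity) (by positivity)
    set ε := min (min 1 (r/2)) (min (δ'*m/2) (ε0/4)) with hεdef
    clear_value ε
    have hεpos : 0 < ε := by
      rw [hεdef]; exact lt_min (lt_min one_pos (by positivity)) (lt_min (by positivity) (by positivity))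
    have hε1 : ε ≤ 1 := by rw [hεdef]; exact (min_le_left _ _).trans (min_le_left _ _)
    have hεr : ε ≤ r/2 := by rw [hεdef]; exact (min_le_left _ _).trans (min_le_right _ _)
    have hεδ' : ε ≤ δ'*m/2 := by rw [hεdef]; exact (min_le_right _ _).trans (min_le_left _ _)
    have hεε0 : ε ≤ ε0/4 := by rw [hεdef]; exact (min_le_right _ _).trans (min_le_right _ _)
    -- choose a
    obtain ⟨a, ha, hxa⟩ := (Metric.infDist_lt_iff hA).mp
      (show infDist (x:E) A < r + ε by rw [← hrdef]; linarith)
    set s := dist (x:E) a with hsdef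
    clear_value s
    have hrs : r ≤ s := by rw [hrdef, hsdef]; exact Metric.infDist_le_dist_of_mem ha
    have hsub : s < r + ε := hxa
    have hspos : 0 < s := lt_of_lt_of_le hrpos hrs
    -- the moved point y
    set y : E := (x:E) + t • (a - (x:E)) with hydef
    clear_value y
    have hyX : y ∈ X := by
      have := hX x.2 (hAX ha) (by linarith : (0:ℝ) ≤ 1 - t) ht0.le (by ring)
      convert this using 1
      rw [hydef]; module
    have hyx : dist y (x:E) = t * s := by
      rw [hydef, dist_eq_norm, add_sub_cancel_left, norm_smul,
        Real.norm_of_nonneg ht0.le, hsdef, dist_eq_norm, ← norm_neg ((x:E) - a)]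
      congr 1; abel
    have hts : t * s ≤ δ/2 := by
      have h1 : t*s ≤ t*(r+1) := mul_le_mul_of_nonneg_left (by linarith) ht0.le
      have h2 : t*(r+1) ≤ (δ/(2*(r+1)))*(r+1) := mul_le_mul_of_nonneg_right htδ (by positivity)
      have h3 : (δ/(2*(r+1)))*(r+1) = δ/2 := by field_simp
      linarith
    have hydom : infDist y P ≤ infDist y A := by
      refine hdom ⟨y, hyX⟩ ?_
      rw [Subtype.dist_eq, hyx]
      linarith
    have hya : dist y a = (1 - t) * s := by
      rw [dist_eq_norm, hydef, hsdef, dist_eq_norm]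
      have : (x:E) + t • (a - (x:E)) - a = (1-t) • ((x:E) - a) := by module
      rw [this, norm_smul, Real.norm_of_nonneg (by linarith : (0:ℝ) ≤ 1 - t)]
    have hyA : infDist y A ≤ (1 - t) * s := hya ▸ Metric.infDist_le_dist_of_mem ha
    -- choose p
    obtain ⟨p, hp, hyp⟩ := (Metric.infDist_lt_iff hP).mp
      (show infDist y P < (1-t)*s + ε by linarith [hydom.trans hyA])
    have hxp : r ≤ dist (x:E) p := by rw [← heq]; exact Metric.infDist_le_dist_of_mem hp
    have hyplow : r - t * s ≤ dist y p := by
      have := dist_triangle (x:E) y p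
      rw [dist_comm (x:E) y, hyx] at this
      linarith
    -- uniform convexity setup
    set u : E := t • ((x:E) - a) with hudef
    set v : E := y - p with hvdef
    clear_value u v
    have hnu : ‖u‖ = t * s := by
      rw [hudef, norm_smul, Real.norm_of_nonneg ht0.le, hsdef, dist_eq_norm]
    have hnv : ‖v‖ = dist y p := by rw [hvdef, dist_eq_norm]
    have huv : u + v = (x:E) - p := by
      rw [hudef, hvdef, hydef]; module
    have hnuv : r ≤ ‖u + v‖ := by rw [huv, ← dist_eq_norm]; exact hxp
    have hu0 : u ≠ 0 := by
      intro h; rw [h, norm_zero] at hnu; nlinarith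
    have hvlow : r/4 ≤ ‖v‖ := by
      rw [hnv]
      have : t * s ≤ (1/2) * (r + ε) := by
        apply mul_le_mul hthalf hsub.le (by positivity) (by norm_num)
      nlinarith
    have hv0 : v ≠ 0 := by
      intro h; rw [h, norm_zero] at hvlow; linarith
    have hmmin : m ≤ min ‖u‖ ‖v‖ := by
      refine le_min ?_ ?_
      · rw [hnu, hmdef]
        exact (min_le_left _ _).trans (mul_le_mul_of_nonneg_left hrs ht0.le)
      · rw [hmdef]; exact (min_le_right _ _).trans hvlow
    have hnvub : ‖v‖ ≤ (1-t)*s + ε := by rw [hnv]; linarith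
    have hcond : ‖u‖ + ‖v‖ - δ' * min ‖u‖ ‖v‖ ≤ ‖u + v‖ := by
      have h1 : δ' * m ≤ δ' * min ‖u‖ ‖v‖ := mul_le_mul_of_nonneg_left hmmin hδ'pos.le
      have h2 : ‖u‖ + ‖v‖ ≤ s + ε := by rw [hnu]; linarith
      have : 2*ε ≤ δ' * m := by linarith
      linarith
    have hdir := hkey u v hu0 hv0 hcond
    -- final estimate
    have hpa : p - a = ((1-t)*s) • (‖u‖⁻¹ • u - ‖v‖⁻¹ • v) + (((1-t)*s - ‖v‖)) • (‖v‖⁻¹ • v) := by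
      have e1 : ((1-t)*s) • (‖u‖⁻¹ • u) = (1-t) • ((x:E) - a) := by
        rw [hnu, hudef, smul_smul, smul_smul]
        congr 1
        field_simp
      have e2 : (‖v‖) • (‖v‖⁻¹ • v) = v := smul_inv_smul₀ (norm_ne_zero_iff.mpr hv0) v
      rw [smul_sub, sub_smul, e1, e2]
      have : p - a = (1 - t) • ((x:E) - a) - v := by
        rw [hvdef, hydef]; module
      rw [this]; abel
    have hnpa : ‖p - a‖ < ε0 := by
      rw [hpa]
      have hb1 : ‖((1-t)*s) • (‖u‖⁻¹ • u - ‖v‖⁻¹ • v)‖ ≤ (r+1) * (ε0/(2*(r+1))) := by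
        rw [norm_smul, Real.norm_of_nonneg (by nlinarith : (0:ℝ) ≤ (1-t)*s)]
        apply mul_le_mul (by nlinarith) hdir.le (norm_nonneg _) (by positivity)
      have hb2 : ‖(((1-t)*s - ‖v‖)) • (‖v‖⁻¹ • v)‖ ≤ ε := by
        have hv1 : ‖(‖v‖⁻¹ : ℝ) • v‖ = 1 := norm_smul_inv_norm (𝕜 := ℝ) hv0
        rw [norm_smul, hv1, mul_one, Real.norm_eq_abs, abs_le]
        constructor
        · linarith
        · nlinarith
      have : (r+1) * (ε0/(2*(r+1))) = ε0/2 := by field_simp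
      calc ‖_ + _‖ ≤ _ + _ := norm_add_le _ _
        _ ≤ (r+1) * (ε0/(2*(r+1))) + ε := by linarith
        _ < ε0 := by rw [this]; linarith
    have := hPA p hp a ha
    rw [dist_eq_norm] at this
    linarith
  · refine interior_maximal (by intro x hx; have h : infDist (x:E) P < infDist (x:E) A := hx; exact le_of_lt h) ?_

    exact isOpen_lt ((continuous_infDist_pt P).comp continuous_subtype_val)
      ((continuous_infDist_pt A).comp continuous_subtype_val)
end

section
/- Let X be a convex subset of a uniformly convex real normed space, and let P, A ⊆ X be nonempty subsets with d(P, A) := inf{‖p − a‖ : p ∈ P, a ∈ A} > 0. Then the dominance region equals the closure (in the subspace topology on X) of its subset of strict inequality: dom(P, A) = cl({x ∈ X : d(x, P) < d(x, A)}). -/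
open Metric Set

/-- Quantitative consequence of uniform convexity: near-equality in the triangle
inequality forces directions to be close. -/
lemma direction_close {E : Type*} [NormedAddCommGroup E] [NormedSpace ℝ E]
    [UniformConvexSpace E] {ε₀ : ℝ} (hε₀ : 0 < ε₀) :
    ∃ δ > 0, ∀ u v : E, u ≠ 0 → v ≠ 0 →
      ‖u‖ + ‖v‖ - min ‖u‖ ‖v‖ * δ < ‖u + v‖ →
      ‖‖u‖⁻¹ • u - ‖v‖⁻¹ • v‖ < ε₀ := by
  obtain ⟨δ, hδ, H⟩ := UniformConvexSpace.uniform_convex (E := E) hε₀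
  refine ⟨δ, hδ, fun u v hu hv hlt => ?_⟩
  by_contra hcon
  push_neg at hcon
  set uh := ‖u‖⁻¹ • u with huh
  set vh := ‖v‖⁻¹ • v with hvh
  have huhn : ‖uh‖ = 1 := norm_smul_inv_norm (𝕜 := ℝ) hu
  have hvhn : ‖vh‖ = 1 := norm_smul_inv_norm (𝕜 := ℝ) hv
  have hsum : ‖uh + vh‖ ≤ 2 - δ := H huhn hvhn hcon
  have hun : (0:ℝ) < ‖u‖ := norm_pos_iff.mpr hu
  have hvn : (0:ℝ) < ‖v‖ := norm_pos_iff.mpr hv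
  set m := min ‖u‖ ‖v‖ with hm
  have hm0 : 0 < m := lt_min hun hvn
  have hmu : m ≤ ‖u‖ := min_le_left _ _
  have hmv : m ≤ ‖v‖ := min_le_right _ _
  have hudec : u = ‖u‖ • uh := by
    rw [huh, smul_smul, mul_inv_cancel₀ hun.ne', one_smul]
  have hvdec : v = ‖v‖ • vh := by
    rw [hvh, smul_smul, mul_inv_cancel₀ hvn.ne', one_smul]
  have hdecomp : u + v = m • (uh + vh) + ((‖u‖ - m) • uh + (‖v‖ - m) • vh) := by
    rw [smul_add]
    nth_rewrite 1 [hudec, hvdec]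
    module
  have hbound : ‖u + v‖ ≤ m * (2 - δ) + ((‖u‖ - m) + (‖v‖ - m)) := by
    rw [hdecomp]
    refine (norm_add_le _ _).trans (add_le_add ?_ ?_)
    · rw [norm_smul, Real.norm_of_nonneg hm0.le]
      exact mul_le_mul_of_nonneg_left hsum hm0.le
    · have e1 : ‖(‖u‖ - m) • uh‖ = ‖u‖ - m := by
        rw [norm_smul, huhn, mul_one, Real.norm_of_nonneg (by linarith)]
      have e2 : ‖(‖v‖ - m) • vh‖ = ‖v‖ - m := by
        rw [norm_smul, hvhn, mul_one, Real.norm_of_nonneg (by linarith)]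
      exact (norm_add_le _ _).trans (by rw [e1, e2])
  have : ‖u + v‖ ≤ ‖u‖ + ‖v‖ - m * δ := by nlinarith
  linarith

set_option maxHeartbeats 1000000 in
/-- Main perturbation lemma: at a point equidistant from positively separated sets
`P` and `A`, one can move slightly towards `P` (along a segment to a point of `P`)
to make the distance to `P` strictly smaller than the distance to `A`. -/
lemma exists_strict_near {E : Type*} [NormedAddCommGroup E] [NormedSpace ℝ E]
    [UniformConvexSpace E] (P A : Set E) (hP : P.Nonempty) (hA : A.Nonempty)
    {s : ℝ} (hs : 0 < s) (hsep : ∀ p ∈ P, ∀ a ∈ A, s ≤ dist p a)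
    (x : E) (heq : Metric.infDist x P = Metric.infDist x A)
    {ρ : ℝ} (hρ : 0 < ρ) :
    ∃ y : E, (∃ p ∈ P, ∃ c ∈ Set.Icc (0:ℝ) 1, y = x + c • (p - x)) ∧
      dist x y < ρ ∧ Metric.infDist y P < Metric.infDist y A := by
  set r := Metric.infDist x P with hr
  have hr0 : 0 ≤ r := Metric.infDist_nonneg
  -- r > 0
  have hrpos : 0 < r := by
    rcases hr0.lt_or_eq with h | h
    · exact h
    · exfalso
      have hxP : Metric.infDist x P < s / 2 := by rw [← hr, ← h]; linarith
      have hxA : Metric.infDist x A < s / 2 := by rw [← heq, ← h]; linarith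
      obtain ⟨p, hp, hpd⟩ := (Metric.infDist_lt_iff hP).mp hxP
      obtain ⟨a, ha, had⟩ := (Metric.infDist_lt_iff hA).mp hxA
      have h1 : dist p a ≤ dist p x + dist x a := dist_triangle _ _ _
      rw [dist_comm p x] at h1
      linarith [hsep p hp a ha]
  obtain ⟨ε₀, hε₀, hε₀eq⟩ : ∃ e : ℝ, 0 < e ∧ (r + 1) * e = s / 4 := by
    refine ⟨s / (4 * (r + 1)), by positivity, ?_⟩
    field_simp
  obtain ⟨δ, hδ, hdir⟩ := direction_close (E := E) hε₀
  obtain ⟨t, ht0, ht2, htρ⟩ :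
      ∃ t : ℝ, 0 < t ∧ t ≤ 1/2 ∧ t * (r + 1) < ρ := by
    refine ⟨min (1/2) (ρ / (2 * (r + 1))), lt_min (by norm_num) (by positivity),
      min_le_left _ _, ?_⟩
    have h1 : min (1/2) (ρ / (2 * (r + 1))) ≤ ρ / (2 * (r + 1)) := min_le_right _ _
    have h2 : (0:ℝ) < r + 1 := by linarith
    calc min (1/2) (ρ / (2 * (r + 1))) * (r + 1) ≤ ρ / (2 * (r + 1)) * (r + 1) := by
          exact mul_le_mul_of_nonneg_right h1 h2.le
      _ = ρ / 2 := by field_simp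
      _ < ρ := by linarith
  obtain ⟨ε, hεpos, hε1, hεs, hεr, hεδ⟩ :
      ∃ e : ℝ, 0 < e ∧ e ≤ 1/2 ∧ e ≤ s/8 ∧ e ≤ r/2 ∧ e ≤ t*r*δ/8 := by
    refine ⟨min (min (1/2) (s/8)) (min (r/2) (t*r*δ/8)), ?_, ?_, ?_, ?_, ?_⟩
    · refine lt_min (lt_min (by norm_num) (by linarith)) (lt_min (by linarith) ?_)
      positivity
    · exact le_trans (min_le_left _ _) (min_le_left _ _)
    · exact le_trans (min_le_left _ _) (min_le_right _ _)
    · exact le_trans (min_le_right _ _) (min_le_left _ _)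
    · exact le_trans (min_le_right _ _) (min_le_right _ _)
  -- pick p close to realizing infDist x P
  have hlt : Metric.infDist x P < r + ε := by linarith
  obtain ⟨p, hp, hLlt⟩ := (Metric.infDist_lt_iff hP).mp hlt
  set L := dist x p with hL
  have hrL : r ≤ L := Metric.infDist_le_dist_of_mem hp
  have hLpos : 0 < L := lt_of_lt_of_le hrpos hrL
  set y := x + t • (p - x) with hy
  have hxyd : dist x y = t * L := by
    rw [hy, dist_eq_norm]
    have h1 : x - (x + t • (p - x)) = t • (x - p) := by module
    rw [h1, norm_smul, Real.norm_of_nonneg ht0.le, hL, dist_eq_norm]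
  have hyp : dist y p = (1 - t) * L := by
    rw [dist_eq_norm]
    have h1 : y - p = (1 - t) • (x - p) := by rw [hy]; module
    rw [h1, norm_smul, Real.norm_of_nonneg (by linarith), hL, dist_eq_norm]
  -- key claim: all points of A are far from y
  have hclaim : ∀ a ∈ A, (1 - t) * L + ε ≤ dist y a := by
    intro a ha
    by_contra hcon
    push_neg at hcon
    set u := a - y with hu
    set v := y - x with hv
    have hvval : v = t • (p - x) := by rw [hv, hy]; abel
    have hvnorm : ‖v‖ = t * L := by
      rw [hvval, norm_smul, Real.norm_of_nonneg ht0.le, hL, dist_eq_norm, norm_sub_rev]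
    have hunorm_lt : ‖u‖ < (1 - t) * L + ε := by
      rw [hu, ← dist_eq_norm, dist_comm]; exact hcon
    have huv : u + v = a - x := by rw [hu, hv]; abel
    have huvnorm : r ≤ ‖u + v‖ := by
      rw [huv, ← dist_eq_norm, dist_comm, heq]
      exact Metric.infDist_le_dist_of_mem ha
    have htL : t * L < r := by nlinarith
    have hunorm_ge : r - t * L ≤ ‖u‖ := by
      have h1 : ‖u + v‖ - ‖v‖ ≤ ‖u‖ := by
        have h2 := norm_add_le u v
        linarith
      rw [hvnorm] at h1
      linarith
    have hune : u ≠ 0 := by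
      intro h0
      rw [h0, norm_zero] at hunorm_ge
      linarith
    have hvne : v ≠ 0 := by
      intro h0
      rw [h0, norm_zero] at hvnorm
      nlinarith
    -- gap estimate
    have hgap : ‖u‖ + ‖v‖ - ‖u + v‖ < 2 * ε := by
      rw [hvnorm]; linarith
    have hm : t * r / 2 ≤ min ‖u‖ ‖v‖ := by
      refine le_min ?_ ?_
      · nlinarith
      · rw [hvnorm]; nlinarith
    have hmδ : 2 * ε < min ‖u‖ ‖v‖ * δ := by
      have h1 := mul_le_mul_of_nonneg_right hm hδ.le
      nlinarith
    have hcond : ‖u‖ + ‖v‖ - min ‖u‖ ‖v‖ * δ < ‖u + v‖ := by linarith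
    have hdirs := hdir u v hune hvne hcond
    -- now estimate ‖a - p‖
    have hvhat : ‖v‖⁻¹ • v = L⁻¹ • (p - x) := by
      rw [hvnorm, hvval, smul_smul]
      congr 1
      field_simp
    have hpy : p - y = ((1 - t) * L) • (‖v‖⁻¹ • v) := by
      rw [hvhat, smul_smul]
      have hLinv : (1 - t) * L * L⁻¹ = 1 - t := by
        field_simp
      rw [hLinv, hy]
      module
    have hud : ‖u‖ • (‖u‖⁻¹ • u) = u := by
      rw [smul_smul, mul_inv_cancel₀ (norm_pos_iff.mpr hune).ne', one_smul]
    have hap : a - p = ‖u‖ • (‖u‖⁻¹ • u - ‖v‖⁻¹ • v) + (‖u‖ - (1 - t) * L) • (‖v‖⁻¹ • v) := by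
      calc a - p = u - (p - y) := by rw [hu]; abel
        _ = u - ((1 - t) * L) • (‖v‖⁻¹ • v) := by rw [← hpy]
        _ = ‖u‖ • (‖u‖⁻¹ • u) - ((1 - t) * L) • (‖v‖⁻¹ • v) := by rw [hud]
        _ = _ := by module
    have hvhn : ‖‖v‖⁻¹ • v‖ = 1 := norm_smul_inv_norm (𝕜 := ℝ) hvne
    have hdiff : |‖u‖ - (1 - t) * L| ≤ ε := by
      rw [abs_le]
      constructor
      · nlinarith
      · nlinarith
    have hunormub : ‖u‖ ≤ r + 1 := by nlinarith
    have hapnorm : ‖a - p‖ < s := by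
      have h1 : ‖a - p‖ ≤ ‖u‖ * ‖‖u‖⁻¹ • u - ‖v‖⁻¹ • v‖ + |‖u‖ - (1 - t) * L| * 1 := by
        rw [hap]
        refine (norm_add_le _ _).trans (add_le_add ?_ ?_)
        · rw [norm_smul, Real.norm_of_nonneg (norm_nonneg _)]
        · rw [norm_smul, hvhn, Real.norm_eq_abs]
      have h2 : ‖u‖ * ‖‖u‖⁻¹ • u - ‖v‖⁻¹ • v‖ ≤ (r + 1) * ε₀ := by
        have h3 := norm_nonneg (‖u‖⁻¹ • u - ‖v‖⁻¹ • v)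
        nlinarith [norm_nonneg u]
      nlinarith
    have h4 := hsep p hp a ha
    rw [dist_eq_norm, norm_sub_rev] at h4
    linarith
  refine ⟨y, ⟨p, hp, t, ⟨ht0.le, by linarith⟩, rfl⟩, ?_, ?_⟩
  · rw [hxyd]
    have h1 : t * L ≤ t * (r + 1) := by nlinarith
    linarith
  · have h1 : Metric.infDist y P ≤ (1 - t) * L := by
      rw [← hyp]; exact Metric.infDist_le_dist_of_mem hp
    have h2 : (1 - t) * L + ε ≤ Metric.infDist y A := by
      by_contra hcon
      push_neg at hcon
      obtain ⟨a, ha, hlt'⟩ := (Metric.infDist_lt_iff hA).mp hcon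
      exact absurd hlt' (not_lt.mpr (hclaim a ha))
    linarith

/-- Main theorem (closure version): for a convex subset `X` of a uniformly convex real
normed space and nonempty positively separated sites `P, A ⊆ X`, the dominance region
`dom(P,A)` equals the closure (in the subspace topology on `X`) of its subset of strict
inequality. -/
theorem dom_eq_closure_strict
    {E : Type*} [NormedAddCommGroup E] [NormedSpace ℝ E] [UniformConvexSpace E]
    (X : Set E) (hX : Convex ℝ X) (P A : Set E)
    (hP : P.Nonempty) (hA : A.Nonempty) (hPX : P ⊆ X) (hAX : A ⊆ X)
    (hsep : 0 < sInf {r : ℝ | ∃ p ∈ P, ∃ a ∈ A, r = dist p a}) :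
    {x : X | Metric.infDist (x : E) P ≤ Metric.infDist (x : E) A}
      = closure {x : X | Metric.infDist (x : E) P < Metric.infDist (x : E) A} := by
  set s := sInf {r : ℝ | ∃ p ∈ P, ∃ a ∈ A, r = dist p a} with hsdef
  have hsep' : ∀ p ∈ P, ∀ a ∈ A, s ≤ dist p a := by
    intro p hp a ha
    refine csInf_le ⟨0, ?_⟩ ⟨p, hp, a, ha, rfl⟩
    rintro z ⟨p', _, a', _, rfl⟩
    exact dist_nonneg
  have hcont : Continuous fun x : X => Metric.infDist (x : E) P :=
    (Metric.continuous_infDist_pt P).comp continuous_subtype_val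
  have hcont' : Continuous fun x : X => Metric.infDist (x : E) A :=
    (Metric.continuous_infDist_pt A).comp continuous_subtype_val
  apply Set.eq_of_subset_of_subset
  · intro x hx
    simp only [Set.mem_setOf_eq] at hx
    rcases hx.lt_or_eq with hlt | heq
    · exact subset_closure hlt
    · rw [Metric.mem_closure_iff]
      intro ρ hρ
      obtain ⟨y, ⟨p, hp, c, hc, hyeq⟩, hdist, hstrict⟩ :=
        exists_strict_near P A hP hA hsep hsep' (x : E) heq hρ
      have hyX : y ∈ X := by
        rw [hyeq]
        have : (x : E) + c • (p - (x : E)) = (1 - c) • (x : E) + c • p := by module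
        rw [this]
        exact hX x.2 (hPX hp) (by linarith [hc.2]) hc.1 (by ring)
      refine ⟨⟨y, hyX⟩, hstrict, ?_⟩
      rwa [Subtype.dist_eq]
  · have hclosed : IsClosed {x : X | Metric.infDist (x : E) P ≤ Metric.infDist (x : E) A} :=
      isClosed_le hcont hcont'
    refine closure_minimal ?_ hclosed
    intro x hx
    simp only [Set.mem_setOf_eq] at hx ⊢
    exact hx.le
end

section
/- Let X be a convex subset of a uniformly convex real normed space, and let P, A ⊆ X be nonempty subsets with d(P, A) := inf{‖p − a‖ : p ∈ P, a ∈ A} > 0. Then the bisector {x ∈ X : d(x, P) = d(x, A)} has empty interior with respect to the subspace topology on X; in particular, it cannot contain any ball of X. -/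
/-!
Suppose a point `z` of `X` had a neighbourhood in `X` contained in the bisector, and let
`d = d(z, P) = d(z, A) > 0`. Take `p ∈ P` almost nearest to `z` and move from `z` a short
distance `s` towards `p`, to a point `y` of `X` that is still on the bisector. Then
`d(y, A) = d(y, P) ≲ d - s`, so there is `a ∈ A` with `‖a - y‖ ≲ d - s` while `‖a - z‖ ≥ d`: the
triangle inequality for `z, y, a` is nearly an equality. Uniform convexity forces `a - y` to
point almost in the direction of `y - z`, so `a` and `p` are both close to the point at
distance `d` from `z` on the ray through `y`, contradicting `d(P, A) > 0`.
-/

open Metric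

theorem le_infDist_add_infDist {α : Type*} [PseudoMetricSpace α] {P A : Set α}
    (hP : P.Nonempty) (hA : A.Nonempty) {ε : ℝ} (hsep : ∀ p ∈ P, ∀ a ∈ A, ε ≤ dist p a)
    (z : α) : ε ≤ infDist z P + infDist z A := by
  suffices ε - infDist z A ≤ infDist z P by linarith
  refine (le_infDist hP).2 fun p hp => ?_
  have hpA : ε ≤ infDist p A := (le_infDist hA).2 (hsep p hp)
  linarith [infDist_le_infDist_add_dist (x := p) (y := z) (s := A), dist_comm p z]

section NormedSpace

variable {E : Type*} [NormedAddCommGroup E] [NormedSpace ℝ E]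

theorem norm_smul_inv_norm_smul_self (x : E) : ‖x‖ • ‖x‖⁻¹ • x = x := by
  rcases eq_or_ne x 0 with rfl | hx
  · simp
  · exact smul_inv_smul₀ (norm_ne_zero_iff.2 hx) x

theorem norm_sub_smul_le_of_norm_eq_one {u : E} (hu : ‖u‖ = 1) (x : E) (r : ℝ) :
    ‖x - r • u‖ ≤ ‖x‖ * ‖‖x‖⁻¹ • x - u‖ + |‖x‖ - r| := by
  calc ‖x - r • u‖ = ‖‖x‖ • (‖x‖⁻¹ • x - u) + (‖x‖ - r) • u‖ := by
        rw [smul_sub, norm_smul_inv_norm_smul_self, sub_smul]; abel_nf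
    _ ≤ ‖x‖ * ‖‖x‖⁻¹ • x - u‖ + |‖x‖ - r| := by
        refine (norm_add_le _ _).trans_eq ?_
        rw [norm_smul, norm_smul, norm_norm, hu, Real.norm_eq_abs, mul_one]

theorem norm_add_sub_norm_add_norm_le {x y : E} (hy : y ≠ 0) (hxy : ‖x‖ ≤ ‖y‖) :
    ‖x + y‖ - ‖y‖ + ‖x‖ ≤ ‖x‖ * ‖‖x‖⁻¹ • x + ‖y‖⁻¹ • y‖ := by
  have hcoef : 0 ≤ 1 - ‖x‖ / ‖y‖ := sub_nonneg.2 ((div_le_one (norm_pos_iff.2 hy)).2 hxy)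
  calc ‖x + y‖ - ‖y‖ + ‖x‖ = ‖x + y‖ - (1 - ‖x‖ / ‖y‖) * ‖y‖ := by
        field_simp; ring
    _ = ‖x + y‖ - ‖(1 - ‖x‖ / ‖y‖) • y‖ := by
        rw [norm_smul, Real.norm_of_nonneg hcoef]
    _ ≤ ‖(x + y) - (1 - ‖x‖ / ‖y‖) • y‖ := norm_sub_norm_le _ _
    _ = ‖x‖ * ‖‖x‖⁻¹ • x + ‖y‖⁻¹ • y‖ := by
        rw [← norm_smul_of_nonneg (norm_nonneg x), smul_add, norm_smul_inv_norm_smul_self,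
          smul_smul, ← div_eq_mul_inv, sub_smul, one_smul]
        congr 1; abel

def crescent (d s η : ℝ) (u : E) : Set E :=
  {a | d ≤ ‖a‖ ∧ ‖a - s • u‖ < d - s + η}

theorem exists_unit_mem_crescent_of_forall_infDist_eq {X P A : Set E} (hX : Convex ℝ X)
    (hP : P.Nonempty) (hA : A.Nonempty) (hPX : P ⊆ X) {z : E} (hz : z ∈ X) {s η : ℝ}
    (hs : 0 < s) (hsz : s ≤ infDist z P) (hη : 0 < η)
    (hbis : ∀ y ∈ X, dist y z ≤ s → infDist y P = infDist y A) :
    ∃ u : E, ‖u‖ = 1 ∧ ∃ p ∈ P, ∃ a ∈ A,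
      p - z ∈ crescent (infDist z P) s η u ∧ a - z ∈ crescent (infDist z P) s η u := by
  set d := infDist z P
  obtain ⟨p, hp, hzp⟩ := (infDist_lt_iff hP).1 (lt_add_of_pos_right d hη)
  rw [dist_eq_norm'] at hzp
  have hdp : d ≤ ‖p - z‖ := (infDist_le_dist_of_mem hp).trans_eq (dist_eq_norm' _ _)
  have hpz : 0 < ‖p - z‖ := hs.trans_le (hsz.trans hdp)
  set u := ‖p - z‖⁻¹ • (p - z)
  have hu : ‖u‖ = 1 := norm_smul_inv_norm (norm_pos_iff.1 hpz)
  have hpu : ‖p - z - s • u‖ < d - s + η := by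
    rw [← smul_inv_smul₀ hpz.ne' (p - z), ← sub_smul, norm_smul, hu, mul_one,
      Real.norm_of_nonneg (by linarith)]
    linarith
  set y := z + s • u
  have hyX : y ∈ X := by
    have := hX.add_smul_sub_mem hz (hPX hp)
      ⟨div_nonneg hs.le hpz.le, (div_le_one hpz).2 (hsz.trans hdp)⟩
    rwa [div_eq_mul_inv, mul_smul] at this
  have hyz : dist y z = s := by
    rw [dist_eq_norm, add_sub_cancel_left, norm_smul, hu, mul_one, Real.norm_of_nonneg hs.le]
  have hzA : infDist z A = d := (hbis z hz (by simpa using hs.le)).symm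
  obtain ⟨a, ha, hya⟩ : ∃ a ∈ A, dist y a < d - s + η := by
    refine (infDist_lt_iff hA).1 (hbis y hyX hyz.le ▸ (infDist_le_dist_of_mem hp).trans_lt ?_)
    rwa [dist_eq_norm', sub_add_eq_sub_sub]
  refine ⟨u, hu, p, hp, a, ha, ⟨hdp, hpu⟩, ?_, ?_⟩
  · exact hzA ▸ (infDist_le_dist_of_mem ha).trans_eq (dist_eq_norm' _ _)
  · rwa [dist_eq_norm', sub_add_eq_sub_sub] at hya

variable [UniformConvexSpace E]

theorem exists_pos_forall_norm_inv_smul_sub_lt {ε : ℝ} (hε : 0 < ε) :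
    ∃ δ > 0, ∀ ⦃x y : E⦄, 0 < ‖x‖ → ‖x‖ ≤ ‖y‖ → ‖x‖ + ‖y‖ - ‖x + y‖ < δ * ‖x‖ →
      ‖‖x‖⁻¹ • x - ‖y‖⁻¹ • y‖ < ε := by
  obtain ⟨δ, hδ, h⟩ := exists_forall_sphere_dist_add_le_two_sub E hε
  refine ⟨δ, hδ, fun x y hx hxy hdefect => ?_⟩
  have hy : y ≠ 0 := norm_pos_iff.1 (hx.trans_le hxy)
  by_contra! hfar
  have hx1 : ‖‖x‖⁻¹ • x‖ = 1 := norm_smul_inv_norm (norm_pos_iff.1 hx)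
  have hy1 : ‖‖y‖⁻¹ • y‖ = 1 := norm_smul_inv_norm hy
  have hsum := mul_le_mul_of_nonneg_left (h hx1 hy1 hfar) hx.le
  linarith [norm_add_sub_norm_add_norm_le hy hxy]

theorem exists_pos_forall_crescent_subset_ball {ε s d : ℝ} (hε : 0 < ε) (hs : 0 < s)
    (hsd : 2 * s ≤ d) :
    ∃ η > 0, ∀ ⦃u : E⦄, ‖u‖ = 1 → crescent d s η u ⊆ ball (d • u) ε := by
  have hd : 0 < d := by linarith
  obtain ⟨δ, hδ, hdir⟩ :=
    exists_pos_forall_norm_inv_smul_sub_lt (E := E) (by positivity : 0 < ε / (2 * d))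
  obtain ⟨η, hη, hηδ, hηs, hηε⟩ : ∃ η > 0, η ≤ δ * s ∧ η ≤ s ∧ η ≤ ε / 2 :=
    ⟨min (δ * s) (min s (ε / 2)), by positivity, min_le_left _ _,
      (min_le_right _ _).trans (min_le_left _ _), (min_le_right _ _).trans (min_le_right _ _)⟩
  refine ⟨η, hη, fun u hu a ⟨ha, hau⟩ => ?_⟩
  set w := a - s • u
  have hsu : ‖s • u‖ = s := by rw [norm_smul, hu, mul_one, Real.norm_of_nonneg hs.le]
  have hw : d - s ≤ ‖w‖ := by linarith [norm_sub_norm_le a (s • u)]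
  have hclose : ‖‖w‖⁻¹ • w - u‖ < ε / (2 * d) := by
    have := hdir (x := s • u) (y := w) (by linarith) (by linarith)
      (by rw [add_sub_cancel]; nlinarith)
    rwa [hsu, smul_smul, inv_mul_cancel₀ hs.ne', one_smul, norm_sub_rev] at this
  have haw : a - d • u = w - (d - s) • u := by simp only [w, sub_smul]; abel
  rw [mem_ball, dist_eq_norm]
  calc ‖a - d • u‖ ≤ ‖w‖ * ‖‖w‖⁻¹ • w - u‖ + |‖w‖ - (d - s)| := by
        rw [haw]; exact norm_sub_smul_le_of_norm_eq_one hu w (d - s)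
    _ < d * (ε / (2 * d)) + ε / 2 := by
        gcongr ?_ + ?_
        · exact mul_lt_mul' (by linarith) hclose (norm_nonneg _) hd
        · rw [abs_lt]; constructor <;> linarith
    _ = ε := by field_simp; ring

end NormedSpace

theorem bisector_interior_empty_general
    {E : Type*} [NormedAddCommGroup E] [NormedSpace ℝ E] [UniformConvexSpace E]
    (X : Set E) (hX : Convex ℝ X) (P A : Set E)
    (hP : P.Nonempty) (hA : A.Nonempty) (hPX : P ⊆ X)
    (hsep : 0 < sInf {r : ℝ | ∃ p ∈ P, ∃ a ∈ A, r = dist p a}) :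
    interior {x : X | Metric.infDist (x : E) P = Metric.infDist (x : E) A} = ∅ := by
  set ε := sInf {r : ℝ | ∃ p ∈ P, ∃ a ∈ A, r = dist p a}
  have hε : ∀ p ∈ P, ∀ a ∈ A, ε ≤ dist p a := fun p hp a ha =>
    csInf_le ⟨0, by rintro _ ⟨_, _, _, _, rfl⟩; exact dist_nonneg⟩ ⟨p, hp, a, ha, rfl⟩
  refine Set.eq_empty_of_forall_notMem fun z hz => ?_
  obtain ⟨r, hr, hball⟩ := Metric.mem_nhds_iff.1 (mem_interior_iff_mem_nhds.1 hz)
  have hbis : ∀ y ∈ X, dist y z < r → infDist y P = infDist y A := fun y hy hyz =>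
    hball (show (⟨y, hy⟩ : X) ∈ ball z r from hyz)
  set d := infDist (z : E) P
  have hd : 0 < d := by
    have hzA : infDist (z : E) A = d := (hbis z z.2 (by simpa using hr)).symm
    linarith [le_infDist_add_infDist hP hA hε z]
  set s := min (r / 2) (d / 2)
  have hs : 0 < s := by positivity
  have hsd : 2 * s ≤ d := by linarith [min_le_right (r / 2) (d / 2)]
  have hsr : s < r := by linarith [min_le_left (r / 2) (d / 2)]
  obtain ⟨η, hη, hcrescent⟩ := exists_pos_forall_crescent_subset_ball (E := E) (half_pos hsep) hs hsd
  obtain ⟨u, hu, p, hp, a, ha, hpu, hau⟩ := exists_unit_mem_crescent_of_forall_infDist_eq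
    hX hP hA hPX z.2 hs (by linarith) hη fun y hy hyz => hbis y hy (hyz.trans_lt hsr)
  have hap : dist a p < ε := by
    rw [← dist_sub_right a p z]
    linarith [dist_triangle_right (a - z) (p - z) (d • u), mem_ball.1 (hcrescent hu hau),
      mem_ball.1 (hcrescent hu hpu)]
  exact (hε p hp a ha).not_gt (by rwa [dist_comm])

/-- The bisector of two nonempty positively separated sites `P, A` contained in a convex
subset `X` of a uniformly convex real normed space has empty interior in the subspace
topology on `X` (so it cannot contain any ball of `X`). -/
theorem bisector_interior_empty
    {E : Type*} [NormedAddCommGroup E] [NormedSpace ℝ E] [UniformConvexSpace E]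
    (X : Set E) (hX : Convex ℝ X) (P A : Set E)
    (hP : P.Nonempty) (hA : A.Nonempty) (hPX : P ⊆ X) (hAX : A ⊆ X)
    (hsep : 0 < sInf {r : ℝ | ∃ p ∈ P, ∃ a ∈ A, r = dist p a}) :
    interior {x : X | Metric.infDist (x : E) P = Metric.infDist (x : E) A} = ∅ :=
  bisector_interior_empty_general X hX P A hP hA hPX hsep
end

section
/- (Clarkson's strong triangle inequality.) Let (X̃, ‖·‖) be a real normed space and define the modulus of convexity δ : [0, 2] → ℝ by δ(ε) = inf{1 − ‖(x + y)/2‖ : x, y ∈ X̃, ‖x‖ = ‖y‖ = 1, ‖x − y‖ ≥ ε}. Let x₁, x₂ be nonzero vectors with x₁ + x₂ ≠ 0, and let αₗ = ‖ xₗ/‖xₗ‖ − (x₁ + x₂)/‖x₁ + x₂‖ ‖ for l = 1, 2. Then ‖x₁ + x₂‖ ≤ ‖x₁‖ + ‖x₂‖ − 2δ(α₁)‖x₁‖ − 2δ(α₂)‖x₂‖. -/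
/-- Clarkson's strong triangle inequality: in any real normed space, for nonzero vectors
`x₁, x₂` with `x₁ + x₂ ≠ 0`,
`‖x₁ + x₂‖ ≤ ‖x₁‖ + ‖x₂‖ - 2δ(α₁)‖x₁‖ - 2δ(α₂)‖x₂‖`,
where `δ` is the modulus of convexity and `αₗ` is Clarkson's angle between `xₗ` and
`x₁ + x₂`. -/
theorem clarkson_strong_triangle_inequality
    {E : Type*} [NormedAddCommGroup E] [NormedSpace ℝ E]
    (δ : ℝ → ℝ)
    (hδ : ∀ ε : ℝ, δ ε =
      sInf {r : ℝ | ∃ x y : E, ‖x‖ = 1 ∧ ‖y‖ = 1 ∧ ε ≤ ‖x - y‖ ∧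
        r = 1 - ‖(2 : ℝ)⁻¹ • (x + y)‖})
    (x₁ x₂ : E) (h₁ : x₁ ≠ 0) (h₂ : x₂ ≠ 0) (h₁₂ : x₁ + x₂ ≠ 0) :
    ‖x₁ + x₂‖ ≤ ‖x₁‖ + ‖x₂‖
      - 2 * δ ‖‖x₁‖⁻¹ • x₁ - ‖x₁ + x₂‖⁻¹ • (x₁ + x₂)‖ * ‖x₁‖
      - 2 * δ ‖‖x₂‖⁻¹ • x₂ - ‖x₁ + x₂‖⁻¹ • (x₁ + x₂)‖ * ‖x₂‖ := by
  have hc : (0:ℝ) < ‖x₁ + x₂‖ := norm_pos_iff.mpr h₁₂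
  have ha : (0:ℝ) < ‖x₁‖ := norm_pos_iff.mpr h₁
  have hb : (0:ℝ) < ‖x₂‖ := norm_pos_iff.mpr h₂
  set z : E := ‖x₁ + x₂‖⁻¹ • (x₁ + x₂) with hz
  have hznorm : ‖z‖ = 1 := by
    rw [hz, norm_smul, Real.norm_eq_abs, abs_of_pos (inv_pos.mpr hc),
      inv_mul_cancel₀ hc.ne']
  have hu₁ : ‖‖x₁‖⁻¹ • x₁‖ = 1 := by
    rw [norm_smul, Real.norm_eq_abs, abs_of_pos (inv_pos.mpr ha), inv_mul_cancel₀ ha.ne']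
  have hu₂ : ‖‖x₂‖⁻¹ • x₂‖ = 1 := by
    rw [norm_smul, Real.norm_eq_abs, abs_of_pos (inv_pos.mpr hb), inv_mul_cancel₀ hb.ne']
  have key : ∀ u : E, ‖u‖ = 1 → δ ‖u - z‖ ≤ 1 - ‖(2:ℝ)⁻¹ • (u + z)‖ := by
    intro u hu
    rw [hδ]
    apply csInf_le
    · refine ⟨0, fun r hr => ?_⟩
      obtain ⟨x, y, hx, hy, _, rfl⟩ := hr
      have hxy : ‖(2:ℝ)⁻¹ • (x + y)‖ ≤ 1 := by
        calc ‖(2:ℝ)⁻¹ • (x + y)‖ ≤ ‖(2:ℝ)⁻¹‖ * ‖x + y‖ := by rw [norm_smul]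
        _ ≤ (2:ℝ)⁻¹ * (‖x‖ + ‖y‖) := by
            rw [Real.norm_eq_abs, abs_of_pos (by norm_num : (0:ℝ) < 2⁻¹)]
            exact mul_le_mul_of_nonneg_left (norm_add_le x y) (by norm_num)
        _ = 1 := by rw [hx, hy]; norm_num
      linarith
    · exact ⟨u, z, hu, hznorm, le_refl _, rfl⟩
  have k1 := key (‖x₁‖⁻¹ • x₁) hu₁
  have k2 := key (‖x₂‖⁻¹ • x₂) hu₂
  have e1 : ‖x₁ + ‖x₁‖ • z‖ = 2 * ‖x₁‖ * ‖(2:ℝ)⁻¹ • (‖x₁‖⁻¹ • x₁ + z)‖ := by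
    rw [← norm_smul_of_nonneg (by positivity : (0:ℝ) ≤ 2 * ‖x₁‖)]
    congr 1
    match_scalars <;> field_simp <;> ring
  have e2 : ‖x₂ + ‖x₂‖ • z‖ = 2 * ‖x₂‖ * ‖(2:ℝ)⁻¹ • (‖x₂‖⁻¹ • x₂ + z)‖ := by
    rw [← norm_smul_of_nonneg (by positivity : (0:ℝ) ≤ 2 * ‖x₂‖)]
    congr 1
    match_scalars <;> field_simp <;> ring
  have hxz : x₁ + x₂ = ‖x₁ + x₂‖ • z := (smul_inv_smul₀ hc.ne' _).symm
  have tri : ‖x₁ + x₂‖ + ‖x₁‖ + ‖x₂‖ ≤ ‖x₁ + ‖x₁‖ • z‖ + ‖x₂ + ‖x₂‖ • z‖ := by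
    have hsum : (x₁ + ‖x₁‖ • z) + (x₂ + ‖x₂‖ • z)
        = (‖x₁ + x₂‖ + ‖x₁‖ + ‖x₂‖) • z := by
      rw [add_smul, add_smul, ← hxz]; abel
    calc ‖x₁ + x₂‖ + ‖x₁‖ + ‖x₂‖
        = ‖(‖x₁ + x₂‖ + ‖x₁‖ + ‖x₂‖) • z‖ := by
          rw [norm_smul, hznorm, Real.norm_eq_abs, mul_one,
            abs_of_pos (by positivity)]
      _ = ‖(x₁ + ‖x₁‖ • z) + (x₂ + ‖x₂‖ • z)‖ := by rw [hsum]
      _ ≤ _ := norm_add_le _ _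
  nlinarith [mul_le_mul_of_nonneg_left k1 (by positivity : (0:ℝ) ≤ 2 * ‖x₁‖),
    mul_le_mul_of_nonneg_left k2 (by positivity : (0:ℝ) ≤ 2 * ‖x₂‖)]
end

section
/- In the real Hilbert space ℓ² of square-summable sequences with standard basis vectors (eₙ), let P = {e₁} ∪ {((n+1)/n)·eₙ : n = 2, 3, 4, …} and A = {((n+2)/n)·eₙ : n = 2, 3, 4, …}. Then P ∩ A = ∅, d(0, P) = d(0, A) = 1 (so 0 lies on the bisector of P and A), and the open ball B(0, 0.1) is contained in dom(P, A) = {x ∈ ℓ² : d(x, P) ≤ d(x, A)}; in particular 0 lies in the interior of dom(P, A), so ∂(dom(P, A)) ≠ {x : d(x, P) = d(x, A)}. This shows the hypothesis d(P, A) > 0 in the main theorem cannot be weakened to P ∩ A = ∅. -/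
/-!
Both site sets lie on the rays of an orthonormal sequence `vₙ`. On the ray through `vₙ` the
`P`-site `((n+1)/n) vₙ` is nearer to the origin than the `A`-site `((n+2)/n) vₙ`, and for
`‖x‖ < 1` it stays nearer to `x`, since `‖x - a u‖ ≤ ‖x - b u‖` as soon as `a ≤ b` and
`2‖x‖ ≤ a + b`. Hence the whole unit ball lies in `dom(P, A)`, although
`d(0, P) = d(0, A) = 1`: the `A`-sites approach the unit sphere only in the limit `n → ∞`.
-/

open Metric Filter Topology
open scoped InnerProductSpace

section InnerProductSpace

variable {E : Type*} [NormedAddCommGroup E] [InnerProductSpace ℝ E]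

-- `‖x - b u‖² - ‖x - a u‖² = (b - a) (a + b - 2⟪x, u⟫)`
theorem norm_sub_smul_le_norm_sub_smul {u x : E} (hu : ‖u‖ = 1) {a b : ℝ} (hab : a ≤ b)
    (hx : 2 * ‖x‖ ≤ a + b) : ‖x - a • u‖ ≤ ‖x - b • u‖ := by
  have hinner : ⟪x, u⟫_ℝ ≤ ‖x‖ := by simpa [hu] using real_inner_le_norm x u
  have expand (c : ℝ) : ‖x - c • u‖ ^ 2 = ‖x‖ ^ 2 - 2 * c * ⟪x, u⟫_ℝ + c ^ 2 := by
    rw [norm_sub_sq_real, real_inner_smul_right, norm_smul, hu, Real.norm_eq_abs, mul_one,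
      sq_abs]
    ring
  rw [← pow_le_pow_iff_left₀ (norm_nonneg _) (norm_nonneg _) two_ne_zero, expand, expand]
  nlinarith [mul_nonneg (sub_nonneg.2 hab) (by linarith : 0 ≤ a + b - 2 * ⟪x, u⟫_ℝ)]

theorem Orthonormal.eq_and_eq_of_smul_eq_smul {ι : Type*} {v : ι → E} (hv : Orthonormal ℝ v)
    {i j : ι} {c d : ℝ} (hd : d ≠ 0) (h : c • v i = d • v j) : i = j ∧ c = d := by
  classical
  have hcd : c * (if j = i then 1 else 0) = d := by
    have := congrArg (inner ℝ (v j)) h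
    rwa [real_inner_smul_right, real_inner_smul_right, orthonormal_iff_ite.1 hv,
      orthonormal_iff_ite.1 hv, if_pos rfl, mul_one] at this
  by_cases hji : j = i
  · simp_all
  · simp only [hji, if_false, mul_zero] at hcd
    exact absurd hcd.symm hd

-- The paper's `P` and `A`, with the basis `eₙ` of `ℓ²` replaced by any orthonormal sequence.
def nearSites (v : ℕ → E) : Set E :=
  {v 1} ∪ {x | ∃ n : ℕ, 2 ≤ n ∧ x = (((n : ℝ) + 1) / n) • v n}

def farSites (v : ℕ → E) : Set E :=
  {x | ∃ n : ℕ, 2 ≤ n ∧ x = (((n : ℝ) + 2) / n) • v n}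

variable {v : ℕ → E}

theorem one_le_natCast_add_div {n : ℕ} (hn : n ≠ 0) {k : ℝ} (hk : 0 ≤ k) :
    1 ≤ ((n : ℝ) + k) / n :=
  (one_le_div (Nat.cast_pos.2 (Nat.pos_of_ne_zero hn))).2 (le_add_of_nonneg_right hk)

theorem nearSites_inter_farSites (hv : Orthonormal ℝ v) : nearSites v ∩ farSites v = ∅ := by
  refine Set.eq_empty_of_forall_notMem ?_
  rintro _ ⟨hP, m, hm, rfl⟩
  have hm0 : (0 : ℝ) < m := by exact_mod_cast (by omega : 0 < m)
  have hcoef : ((m : ℝ) + 2) / m ≠ 0 := by positivity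
  rcases hP with h | ⟨n, -, h⟩
  · rw [← one_smul ℝ (v 1)] at h
    have := (hv.eq_and_eq_of_smul_eq_smul hcoef h.symm).1
    omega
  · obtain ⟨rfl, hnm⟩ := hv.eq_and_eq_of_smul_eq_smul hcoef h.symm
    rw [div_left_inj' hm0.ne'] at hnm
    linarith

theorem infDist_zero_nearSites (hv : Orthonormal ℝ v) : infDist 0 (nearSites v) = 1 := by
  have hmem : v 1 ∈ nearSites v := Or.inl rfl
  refine le_antisymm ?_ ((le_infDist ⟨_, hmem⟩).2 ?_)
  · simpa [hv.1 1] using infDist_le_dist_of_mem (x := (0 : E)) hmem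
  · rintro _ (rfl | ⟨n, hn, rfl⟩)
    · simp [hv.1 1]
    · rw [dist_zero_left, norm_smul_of_nonneg (by positivity), hv.1 n, mul_one]
      exact one_le_natCast_add_div (by omega) zero_le_one

theorem infDist_zero_farSites (hv : Orthonormal ℝ v) : infDist 0 (farSites v) = 1 := by
  have hmem (n : ℕ) (hn : 2 ≤ n) : (((n : ℝ) + 2) / n) • v n ∈ farSites v := ⟨n, hn, rfl⟩
  refine le_antisymm ?_ ((le_infDist ⟨_, hmem 2 le_rfl⟩).2 ?_)
  · have hlim : Tendsto (fun n : ℕ => 1 + 2 / (n : ℝ)) atTop (𝓝 1) := by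
      simpa using (tendsto_const_div_atTop_nhds_zero_nat (2 : ℝ)).const_add 1
    refine ge_of_tendsto hlim ((eventually_ge_atTop 2).mono fun n hn => ?_)
    have hn0 : (n : ℝ) ≠ 0 := by exact_mod_cast (by omega : n ≠ 0)
    calc infDist 0 (farSites v) ≤ dist 0 ((((n : ℝ) + 2) / n) • v n) :=
          infDist_le_dist_of_mem (hmem n hn)
      _ = 1 + 2 / n := by
          rw [dist_zero_left, norm_smul_of_nonneg (by positivity), hv.1 n, mul_one]
          field_simp
  · rintro _ ⟨n, hn, rfl⟩
    rw [dist_zero_left, norm_smul_of_nonneg (by positivity), hv.1 n, mul_one]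
    exact one_le_natCast_add_div (by omega) zero_le_two

theorem ball_subset_dom_nearSites_farSites (hv : Orthonormal ℝ v) :
    ball (0 : E) 1 ⊆ {x | infDist x (nearSites v) ≤ infDist x (farSites v)} := by
  intro x hx
  rw [mem_ball, dist_zero_right] at hx
  show infDist x _ ≤ _
  refine (le_infDist (s := farSites v) ⟨_, 2, le_rfl, rfl⟩).2 ?_
  rintro _ ⟨n, hn, rfl⟩
  refine (infDist_le_dist_of_mem (s := nearSites v) (Or.inr ⟨n, hn, rfl⟩)).trans ?_
  rw [dist_eq_norm, dist_eq_norm]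
  refine norm_sub_smul_le_norm_sub_smul (hv.1 n) ?_ ?_
  · gcongr; norm_num
  · have h1 := one_le_natCast_add_div (n := n) (by omega) zero_le_one
    have h2 := one_le_natCast_add_div (n := n) (by omega) zero_le_two
    linarith

end InnerProductSpace

theorem lp.orthonormal_single_one {ι : Type*} [DecidableEq ι] :
    Orthonormal ℝ (fun i : ι => lp.single (E := fun _ : ι => ℝ) 2 i (1 : ℝ)) := by
  rw [orthonormal_iff_ite]
  intro i j
  rw [lp.inner_single_left, lp.single_apply]
  split_ifs <;> simp_all

/-- Counterexample in `ℓ²` showing `d(P,A) > 0` cannot be weakened to `P ∩ A = ∅`: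
with `P = {e₁} ∪ {((n+1)/n)eₙ : n ≥ 2}` and `A = {((n+2)/n)eₙ : n ≥ 2}` one has
`P ∩ A = ∅`, `d(0,P) = d(0,A) = 1`, yet the ball `B(0, 0.1)` is contained in `dom(P,A)`,
so `0` is interior to `dom(P,A)` and the boundary of `dom(P,A)` is not the bisector. -/
theorem counterexample_ell2_disjoint_sites
    (e : ℕ → lp (fun _ : ℕ => ℝ) 2)
    (he : ∀ n : ℕ, e n = lp.single 2 n (1 : ℝ))
    (P A : Set (lp (fun _ : ℕ => ℝ) 2))
    (hP : P = {e 1} ∪ {x | ∃ n : ℕ, 2 ≤ n ∧ x = (((n : ℝ) + 1) / n) • e n})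
    (hA : A = {x | ∃ n : ℕ, 2 ≤ n ∧ x = (((n : ℝ) + 2) / n) • e n}) :
    P ∩ A = ∅ ∧
    Metric.infDist (0 : lp (fun _ : ℕ => ℝ) 2) P = 1 ∧
    Metric.infDist (0 : lp (fun _ : ℕ => ℝ) 2) A = 1 ∧
    Metric.ball (0 : lp (fun _ : ℕ => ℝ) 2) 0.1
      ⊆ {x | Metric.infDist x P ≤ Metric.infDist x A} ∧
    (0 : lp (fun _ : ℕ => ℝ) 2) ∈ interior {x | Metric.infDist x P ≤ Metric.infDist x A} ∧
    frontier {x : lp (fun _ : ℕ => ℝ) 2 | Metric.infDist x P ≤ Metric.infDist x A}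
      ≠ {x | Metric.infDist x P = Metric.infDist x A} := by
  have hv : Orthonormal ℝ e := by simpa only [← he] using lp.orthonormal_single_one (ι := ℕ)
  change P = nearSites e at hP
  change A = farSites e at hA
  subst hP hA
  have hball := (ball_subset_ball (by norm_num : (0.1 : ℝ) ≤ 1)).trans
    (ball_subset_dom_nearSites_farSites hv)
  have hinterior := interior_maximal hball isOpen_ball (mem_ball_self (by norm_num))
  refine ⟨nearSites_inter_farSites hv, infDist_zero_nearSites hv, infDist_zero_farSites hv,
    hball, hinterior, fun hbisector => ?_⟩
  have hzero : (0 : lp (fun _ : ℕ => ℝ) 2) ∈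
      {x | infDist x (nearSites e) = infDist x (farSites e)} :=
    (infDist_zero_nearSites hv).trans (infDist_zero_farSites hv).symm
  exact (hbisector ▸ hzero).2 hinterior
end

section
/- In ℝ² equipped with the maximum norm ‖(x, y)‖∞ = max(|x|, |y|), let P = {(0, 0)} and A = {(−2, 0), (2, 0), (0, −2)}. Then d(P, A) = 2 > 0, yet for every point z = (x, y) with y ≥ |x| + 2 one has d(z, P) = d(z, A) = y. Consequently the bisector {z ∈ ℝ² : d(z, P) = d(z, A)} contains the nonempty open set {(x, y) : y > |x| + 2} and hence has nonempty interior; in particular the conclusion ∂(dom(P, A)) = {z : d(z, P) = d(z, A)} of the main theorem fails in this non-uniformly-convex space. -/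
lemma dist_fin2 (f g : Fin 2 → ℝ) : dist f g = max (dist (f 0) (g 0)) (dist (f 1) (g 1)) := by
  simp only [dist_pi_def]
  rw [show (Finset.univ : Finset (Fin 2)) = {0, 1} from rfl]
  rw [Finset.sup_insert, Finset.sup_singleton]
  rw [dist_nndist, dist_nndist]
  push_cast
  rfl

/-- Counterexample in `(ℝ², ‖·‖_∞)` (not uniformly convex): with `P = {(0,0)}` and
`A = {(-2,0),(2,0),(0,-2)}` one has `d(P,A) = 2 > 0`, yet every `z = (x,y)` with
`y ≥ |x| + 2` satisfies `d(z,P) = d(z,A) = y`. Thus the bisector contains the nonempty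
open set `{(x,y) : y > |x| + 2}`, has nonempty interior, and the boundary of `dom(P,A)`
is not the bisector. -/
theorem counterexample_sup_norm
    (P A : Set (Fin 2 → ℝ))
    (hP : P = {![(0 : ℝ), 0]})
    (hA : A = {![(-2 : ℝ), 0], ![(2 : ℝ), 0], ![(0 : ℝ), -2]}) :
    sInf {r : ℝ | ∃ p ∈ P, ∃ a ∈ A, r = dist p a} = 2 ∧
    (∀ z : Fin 2 → ℝ, |z 0| + 2 ≤ z 1 →
      Metric.infDist z P = z 1 ∧ Metric.infDist z A = z 1) ∧
    {z : Fin 2 → ℝ | |z 0| + 2 < z 1}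
      ⊆ {z : Fin 2 → ℝ | Metric.infDist z P = Metric.infDist z A} ∧
    IsOpen {z : Fin 2 → ℝ | |z 0| + 2 < z 1} ∧
    {z : Fin 2 → ℝ | |z 0| + 2 < z 1}.Nonempty ∧
    (interior {z : Fin 2 → ℝ | Metric.infDist z P = Metric.infDist z A}).Nonempty ∧
    frontier {z : Fin 2 → ℝ | Metric.infDist z P ≤ Metric.infDist z A}
      ≠ {z : Fin 2 → ℝ | Metric.infDist z P = Metric.infDist z A} := by
  subst hP hA
  have d1 : dist ![(0:ℝ),0] ![(-2:ℝ),0] = 2 := by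
    rw [dist_fin2]; norm_num [Real.dist_eq]
  have d2 : dist ![(0:ℝ),0] ![(2:ℝ),0] = 2 := by
    rw [dist_fin2]; norm_num [Real.dist_eq]
  have d3 : dist ![(0:ℝ),0] ![(0:ℝ),-2] = 2 := by
    rw [dist_fin2]; norm_num [Real.dist_eq]
  have key : ∀ z : Fin 2 → ℝ, |z 0| + 2 ≤ z 1 →
      Metric.infDist z ({![(0:ℝ),0]} : Set (Fin 2 → ℝ)) = z 1 ∧
      Metric.infDist z ({![(-2:ℝ),0], ![(2:ℝ),0], ![(0:ℝ),-2]} : Set (Fin 2 → ℝ)) = z 1 := by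
    intro z hz
    have habs : (0:ℝ) ≤ |z 0| := abs_nonneg _
    have h1 : (0:ℝ) ≤ z 1 := by linarith
    have h0 : |z 0| ≤ z 1 := by linarith
    have e1 : dist z ![(0:ℝ),0] = z 1 := by
      rw [dist_fin2]
      simp only [Matrix.cons_val_zero, Matrix.cons_val_one, Matrix.head_cons]
      rw [Real.dist_eq, Real.dist_eq, sub_zero, sub_zero, abs_of_nonneg h1,
        max_eq_right h0]
    have eA1 : dist z ![(-2:ℝ),0] = z 1 := by
      rw [dist_fin2]
      simp only [Matrix.cons_val_zero, Matrix.cons_val_one, Matrix.head_cons]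
      rw [Real.dist_eq, Real.dist_eq, sub_zero, abs_of_nonneg h1]
      have : |z 0 - (-2)| ≤ z 1 := by
        have := abs_sub_abs_le_abs_sub (z 0) (-2 : ℝ)
        have h2 := abs_sub (z 0) (-2 : ℝ)
        calc |z 0 - (-2)| ≤ |z 0| + |(-2:ℝ)| := abs_sub _ _
          _ = |z 0| + 2 := by norm_num
          _ ≤ z 1 := hz
      exact max_eq_right this
    have eA2 : dist z ![(2:ℝ),0] = z 1 := by
      rw [dist_fin2]
      simp only [Matrix.cons_val_zero, Matrix.cons_val_one, Matrix.head_cons]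
      rw [Real.dist_eq, Real.dist_eq, sub_zero, abs_of_nonneg h1]
      have : |z 0 - 2| ≤ z 1 := by
        calc |z 0 - 2| ≤ |z 0| + |(2:ℝ)| := abs_sub _ _
          _ = |z 0| + 2 := by norm_num
          _ ≤ z 1 := hz
      exact max_eq_right this
    have eA3 : dist z ![(0:ℝ),-2] = z 1 + 2 := by
      rw [dist_fin2]
      simp only [Matrix.cons_val_zero, Matrix.cons_val_one, Matrix.head_cons]
      rw [Real.dist_eq, Real.dist_eq, sub_zero, sub_neg_eq_add,
        abs_of_nonneg (by linarith : (0:ℝ) ≤ z 1 + 2)]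
      have : |z 0| ≤ z 1 + 2 := by linarith
      exact max_eq_right this
    constructor
    · rw [Metric.infDist_singleton, e1]
    · apply le_antisymm
      · calc Metric.infDist z _ ≤ dist z ![(-2:ℝ),0] :=
              Metric.infDist_le_dist_of_mem (by simp)
          _ = z 1 := eA1
      · rw [← not_lt]
        rw [Metric.infDist_lt_iff ⟨![(-2:ℝ),0], by simp⟩]
        rintro ⟨y, (rfl | rfl | rfl), hy⟩
        · rw [eA1] at hy; linarith
        · rw [eA2] at hy; linarith
        · rw [eA3] at hy; linarith
  refine ⟨?_, key, ?_, ?_, ?_, ?_, ?_⟩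
  · have hset : {r : ℝ | ∃ p ∈ ({![(0:ℝ),0]} : Set (Fin 2 → ℝ)), ∃ a ∈
        ({![(-2:ℝ),0], ![(2:ℝ),0], ![(0:ℝ),-2]} : Set (Fin 2 → ℝ)), r = dist p a} = {2} := by
      ext r
      constructor
      · rintro ⟨p, rfl, a, (rfl | rfl | rfl), rfl⟩ <;>
          simp [d1, d2, d3]
      · rintro rfl
        exact ⟨_, rfl, _, Or.inl rfl, d1.symm⟩
    rw [hset, csInf_singleton]
  · intro z hz
    obtain ⟨h1, h2⟩ := key z (le_of_lt hz)
    simp only [Set.mem_setOf_eq]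
    rw [h1, h2]
  · exact isOpen_lt (by continuity) (continuous_apply 1)
  · exact ⟨![(0:ℝ), 3], by norm_num⟩
  · have hmem : (![(0:ℝ), 3] : Fin 2 → ℝ) ∈ {z : Fin 2 → ℝ | |z 0| + 2 < z 1} := by
      simp only [Set.mem_setOf_eq, Matrix.cons_val_zero, Matrix.cons_val_one, Matrix.head_cons]
      norm_num
    have hsub : {z : Fin 2 → ℝ | |z 0| + 2 < z 1} ⊆
        {z : Fin 2 → ℝ | Metric.infDist z ({![(0:ℝ),0]} : Set (Fin 2 → ℝ)) =
          Metric.infDist z ({![(-2:ℝ),0], ![(2:ℝ),0], ![(0:ℝ),-2]} : Set (Fin 2 → ℝ))} := by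
      intro z hz
      obtain ⟨h1, h2⟩ := key z (le_of_lt hz)
      simp only [Set.mem_setOf_eq]
      rw [h1, h2]
    exact ⟨_, interior_maximal hsub (isOpen_lt (by continuity) (continuous_apply 1)) hmem⟩
  · intro h
    set S := {z : Fin 2 → ℝ | Metric.infDist z ({![(0:ℝ),0]} : Set (Fin 2 → ℝ)) ≤
        Metric.infDist z ({![(-2:ℝ),0], ![(2:ℝ),0], ![(0:ℝ),-2]} : Set (Fin 2 → ℝ))} with hS
    have hmem : (![(0:ℝ), 3] : Fin 2 → ℝ) ∈ {z : Fin 2 → ℝ | |z 0| + 2 < z 1} := by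
      simp only [Set.mem_setOf_eq, Matrix.cons_val_zero, Matrix.cons_val_one, Matrix.head_cons]
      norm_num
    have hsub : {z : Fin 2 → ℝ | |z 0| + 2 < z 1} ⊆ S := by
      intro z hz
      obtain ⟨h1, h2⟩ := key z (le_of_lt hz)
      simp only [hS, Set.mem_setOf_eq]
      rw [h1, h2]
    have hz0 : (![(0:ℝ), 3] : Fin 2 → ℝ) ∈ interior S :=
      interior_maximal hsub (isOpen_lt (by continuity) (continuous_apply 1)) hmem
    have hz0b : (![(0:ℝ), 3] : Fin 2 → ℝ) ∈ frontier S := by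
      rw [h]
      obtain ⟨h1, h2⟩ := key ![(0:ℝ), 3] (by norm_num)
      simp only [Set.mem_setOf_eq]
      rw [h1, h2]
    exact hz0b.2 hz0
end

section
/- Let X be a convex subset of a uniformly convex real normed space, let K be a finite index set with at least two elements, and let (P_k)_{k∈K} be nonempty subsets of X such that d(P_j, P_k) > 0 for all j ≠ k. Fix k ∈ K and let R_k = dom(P_k, ⋃_{j≠k} P_j) be the Voronoi cell of P_k. Then a point x ∈ X lies in the interior of R_k with respect to the subspace topology on X if and only if d(x, P_k) < d(x, P_j) for every j ≠ k. -/
set_option maxHeartbeats 1000000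

open Metric

private lemma le_infDist_aux {α : Type*} [MetricSpace α] {s : Set α} (hs : s.Nonempty)
    {x : α} {b : ℝ} (h : ∀ y ∈ s, b ≤ dist x y) : b ≤ Metric.infDist x s := by
  by_contra hb
  push_neg at hb
  obtain ⟨y, hy, hlt⟩ := (Metric.infDist_lt_iff hs).mp hb
  exact absurd (h y hy) (not_le.mpr hlt)

/-- Voronoi cells (interior version): for finitely many (at least two) nonempty, pairwise
positively separated sites `(P k)` in a convex subset `X` of a uniformly convex real
normed space, a point `x ∈ X` is interior (in the subspace topology on `X`) to the
Voronoi cell `R k = dom(P k, ⋃_{j ≠ k} P j)` iff `d(x, P k) < d(x, P j)` for all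
`j ≠ k`. -/
theorem mem_interior_voronoi_cell_iff
    {E : Type*} [NormedAddCommGroup E] [NormedSpace ℝ E] [UniformConvexSpace E]
    (X : Set E) (hX : Convex ℝ X)
    {K : Type*} [Fintype K] [Nontrivial K]
    (P : K → Set E) (hPne : ∀ k, (P k).Nonempty) (hPX : ∀ k, P k ⊆ X)
    (hsep : ∀ j k : K, j ≠ k →
      0 < sInf {r : ℝ | ∃ p ∈ P j, ∃ a ∈ P k, r = dist p a})
    (k : K) (x : X) :
    x ∈ interior {y : X |
        Metric.infDist (y : E) (P k) ≤ Metric.infDist (y : E) (⋃ j ∈ {j : K | j ≠ k}, P j)}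
      ↔ ∀ j : K, j ≠ k → Metric.infDist (x : E) (P k) < Metric.infDist (x : E) (P j) := by
  set U : Set E := ⋃ j ∈ {j : K | j ≠ k}, P j with hU
  obtain ⟨k', hk'⟩ := exists_ne k
  have hUsub : ∀ j : K, j ≠ k → P j ⊆ U := by
    intro j hj
    exact Set.subset_biUnion_of_mem (u := P) hj
  have hUne : U.Nonempty := (hPne k').mono (hUsub k' hk')
  have hUmem : ∀ p ∈ U, ∃ j : K, j ≠ k ∧ p ∈ P j := by
    intro p hp
    simp only [hU, Set.mem_iUnion, Set.mem_setOf_eq] at hp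
    obtain ⟨j, hj, hpj⟩ := hp
    exact ⟨j, hj, hpj⟩
  constructor
  · -- hard direction
    intro hx j hjk
    by_contra hle
    push_neg at hle
    have hxcell : Metric.infDist (x : E) (P k) ≤ Metric.infDist (x : E) U := by
      have hmem := interior_subset hx
      simpa using hmem
    have hUle : Metric.infDist (x : E) U ≤ Metric.infDist (x : E) (P j) :=
      infDist_le_infDist_of_subset (hUsub j hjk) (hPne j)
    set r : ℝ := Metric.infDist (x : E) (P k) with hr_def
    have hrj : Metric.infDist (x : E) (P j) = r := le_antisymm hle (hxcell.trans hUle)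
    set s : ℝ := sInf {r : ℝ | ∃ p ∈ P j, ∃ a ∈ P k, r = dist p a} with hs_def
    have hs : 0 < s := hsep j k hjk
    have hs_le : ∀ p ∈ P j, ∀ q ∈ P k, s ≤ dist p q := by
      intro p hp q hq
      apply csInf_le
      · exact ⟨0, fun z hz => by obtain ⟨p', _, q', _, rfl⟩ := hz; exact dist_nonneg⟩
      · exact ⟨p, hp, q, hq, rfl⟩
    -- s ≤ 2 r, hence r > 0
    have h2r : s ≤ 2 * r := by
      by_contra hc
      push_neg at hc
      have hε : (0:ℝ) < (s - 2*r)/2 := by linarith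
      obtain ⟨p, hp, hxp⟩ := (Metric.infDist_lt_iff (hPne j)).mp
        (by rw [hrj] ; linarith : Metric.infDist (x : E) (P j) < r + (s - 2*r)/2)
      obtain ⟨q, hq, hxq⟩ := (Metric.infDist_lt_iff (hPne k)).mp
        (by rw [← hr_def] ; linarith : Metric.infDist (x : E) (P k) < r + (s - 2*r)/2)
      have := hs_le p hp q hq
      have htri : dist p q ≤ dist p (x:E) + dist (x:E) q := dist_triangle _ _ _
      rw [dist_comm p (x:E)] at htri
      linarith
    have hr : 0 < r := by linarith
    -- uniform convexity constant
    have hε₀ : (0:ℝ) < (3*s/4) / (r + s/4) := by positivity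
    obtain ⟨δ, hδ, hδ2⟩ := exists_forall_closed_ball_dist_add_le_two_sub E hε₀
    -- radius from interior
    rw [mem_interior_iff_mem_nhds, Metric.mem_nhds_iff] at hx
    obtain ⟨ρ, hρ, hball⟩ := hx
    -- parameters
    obtain ⟨t, ht0, ht1, htρ⟩ : ∃ t : ℝ, 0 < t ∧ t ≤ 1/2 ∧ t * (r+s) ≤ ρ/2 := by
      refine ⟨min (ρ / (2*(r+s))) (1/2), lt_min (by positivity) (by norm_num),
        min_le_right _ _, ?_⟩
      calc min (ρ / (2*(r+s))) (1/2) * (r+s) ≤ (ρ / (2*(r+s))) * (r+s) := by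
            apply mul_le_mul_of_nonneg_right (min_le_left _ _) (by positivity)
        _ = ρ / 2 := by field_simp
    obtain ⟨β, hβ0, hβs, hβδ⟩ : ∃ β : ℝ, 0 < β ∧ β ≤ s/8 ∧ β ≤ δ*t*r :=
      ⟨min (s/8) (δ*t*r), lt_min (by positivity) (by positivity),
        min_le_left _ _, min_le_right _ _⟩
    -- pick a ∈ P j close to x
    obtain ⟨a, haj, hax⟩ := (Metric.infDist_lt_iff (hPne j)).mp
      (by rw [hrj]; linarith : Metric.infDist (x : E) (P j) < r + β/4)
    set A : ℝ := dist (x:E) a with hA_def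
    have hA1 : r ≤ A := by rw [← hrj]; exact Metric.infDist_le_dist_of_mem haj
    have hA2 : A < r + β/4 := hax
    have hApos : 0 < A := lt_of_lt_of_le hr hA1
    -- the perturbed point
    obtain ⟨y, hyX, hyx, hya, hy_sub⟩ : ∃ y, y ∈ X ∧ dist y (x:E) = t * A ∧
        dist y a = (1-t) * A ∧ ∀ p : E, p - y = (p - (x:E)) - t • (a - (x:E)) := by
      refine ⟨(x:E) + t • (a - (x:E)), ?_, ?_, ?_, fun p => by abel⟩
      · have h1 : (1-t) • (x:E) + t • a ∈ X :=
          hX x.2 (hPX j haj) (by linarith) ht0.le (by ring)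
        have h2 : (x:E) + t • (a - (x:E)) = (1-t) • (x:E) + t • a := by module
        rw [h2]; exact h1
      · rw [dist_eq_norm, add_sub_cancel_left, norm_smul,
          Real.norm_eq_abs, abs_of_pos ht0, hA_def, dist_comm, dist_eq_norm]
      · have h3 : (x:E) + t • (a - (x:E)) - a = (1-t) • ((x:E) - a) := by module
        rw [dist_eq_norm, h3, norm_smul, Real.norm_eq_abs,
          abs_of_pos (by linarith : (0:ℝ) < 1 - t), hA_def, dist_eq_norm]
    -- y is in the ball, hence in the cell
    have hycell : Metric.infDist y (P k) ≤ Metric.infDist y U := by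
      have hmem : (⟨y, hyX⟩ : X) ∈ Metric.ball x ρ := by
        rw [Metric.mem_ball, Subtype.dist_eq]
        show dist y (x:E) < ρ
        rw [hyx]
        have : t * A ≤ t * (r + s) := by
          apply mul_le_mul_of_nonneg_left _ ht0.le
          linarith
        linarith
      exact hball hmem
    -- upper bound on d(y, P j)
    have hup : Metric.infDist y U ≤ (1-t) * A := by
      refine le_trans (infDist_le_infDist_of_subset (hUsub j hjk) (hPne j)) ?_
      rw [← hya]
      exact Metric.infDist_le_dist_of_mem haj
    -- lower bound on d(y, P k)
    have hlow : (1-t) * A + β/2 ≤ Metric.infDist y (P k) := by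
      apply le_infDist_aux (hPne k)
      intro p hp
      set R : ℝ := dist (x:E) p with hR_def
      have hR1 : r ≤ R := Metric.infDist_le_dist_of_mem hp
      have hRpos : 0 < R := lt_of_lt_of_le hr hR1
      have hyp_norm : dist y p = ‖p - y‖ := by rw [dist_comm, dist_eq_norm]
      by_cases hcase : r + s/4 ≤ R
      · -- far case
        have h1 : R - t * A ≤ dist y p := by
          have htri : dist (x:E) p ≤ dist (x:E) y + dist y p := dist_triangle _ _ _
          rw [dist_comm (x:E) y, hyx] at htri
          linarith
        nlinarith
      · -- near case: uniform convexity
        push_neg at hcase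
        obtain ⟨u, hnu, hRu⟩ : ∃ u : E, ‖u‖ = 1 ∧ R • u = p - (x:E) := by
          refine ⟨R⁻¹ • (p - (x:E)), ?_, ?_⟩
          · rw [norm_smul, Real.norm_eq_abs, abs_of_pos (inv_pos.mpr hRpos)]
            rw [hR_def, dist_comm, dist_eq_norm] at hRpos ⊢
            field_simp
          · rw [smul_smul, mul_inv_cancel₀ hRpos.ne', one_smul]
        obtain ⟨v, hnv, hAv⟩ : ∃ v : E, ‖v‖ = 1 ∧ A • v = a - (x:E) := by
          refine ⟨A⁻¹ • (a - (x:E)), ?_, ?_⟩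
          · rw [norm_smul, Real.norm_eq_abs, abs_of_pos (inv_pos.mpr hApos)]
            rw [hA_def, dist_comm, dist_eq_norm] at hApos ⊢
            field_simp
          · rw [smul_smul, mul_inv_cancel₀ hApos.ne', one_smul]
        have hpa : s ≤ ‖p - a‖ := by
          have := hs_le a haj p hp
          rw [dist_eq_norm, ← norm_neg] at this
          simpa using this
        -- ‖u - v‖ ≥ ε₀
        have huv : (3*s/4) / (r + s/4) ≤ ‖u - v‖ := by
          have hkey : ‖p - a‖ ≤ R * ‖u - v‖ + |R - A| := by
            have hdecomp : p - a = R • (u - v) + (R - A) • v := by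
              have : p - a = R • u - A • v := by rw [hRu, hAv]; abel
              rw [this]; module
            calc ‖p - a‖ = ‖R • (u - v) + (R - A) • v‖ := by rw [hdecomp]
              _ ≤ ‖R • (u - v)‖ + ‖(R - A) • v‖ := norm_add_le _ _
              _ = R * ‖u - v‖ + |R - A| := by
                  rw [norm_smul, norm_smul, Real.norm_eq_abs, Real.norm_eq_abs,
                    abs_of_pos hRpos, hnv, mul_one]
          have hAR : |R - A| ≤ s/4 := by
            rw [abs_le]
            constructor <;> nlinarith
          have h1 : 3*s/4 ≤ R * ‖u - v‖ := by linarith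
          rw [div_le_iff₀ (by positivity)]
          calc 3*s/4 ≤ R * ‖u - v‖ := h1
            _ ≤ (r + s/4) * ‖u - v‖ :=
                mul_le_mul_of_nonneg_right hcase.le (norm_nonneg _)
            _ = ‖u - v‖ * (r + s/4) := mul_comm _ _
        have hsum : ‖u + v‖ ≤ 2 - δ := hδ2 hnu.le hnv.le huv
        -- lower bound for ‖p - y‖
        have hdecomp2 : p - y = (R + t*A) • u - (t*A) • (u + v) := by
          have h1 : p - y = R • u - (t*A) • v := by
            rw [hy_sub p, ← hRu, ← hAv, smul_smul]
          rw [h1]; module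
        have hn1 : ‖(R + t*A) • u‖ = R + t*A := by
          rw [norm_smul, hnu, Real.norm_eq_abs, mul_one,
            abs_of_pos (by positivity : (0:ℝ) < R + t*A)]
        have hn2 : ‖(t*A) • (u + v)‖ ≤ (t*A) * (2 - δ) := by
          rw [norm_smul, Real.norm_eq_abs, abs_of_pos (by positivity : (0:ℝ) < t*A)]
          exact mul_le_mul_of_nonneg_left hsum (by positivity)
        have hnorm : (R + t*A) - (t*A) * (2 - δ) ≤ ‖p - y‖ := by
          have h2 : ‖(R + t*A) • u‖ - ‖(t*A) • (u + v)‖ ≤ ‖(R + t*A) • u - (t*A) • (u + v)‖ :=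
            norm_sub_norm_le _ _
          rw [hn1, ← hdecomp2] at h2
          linarith
        rw [hyp_norm]
        have hδA : δ * t * r ≤ δ * t * A :=
          mul_le_mul_of_nonneg_left hA1 (by positivity)
        nlinarith
    linarith
  · -- easy direction
    intro h
    set S : Set X := {y : X | ∀ j ∈ {j : K | j ≠ k},
        Metric.infDist (y : E) (P k) < Metric.infDist (y : E) (P j)} with hS_def
    have hopen : IsOpen S := by
      have heq : S = ⋂ j ∈ {j : K | j ≠ k}, {y : X |
          Metric.infDist (y : E) (P k) < Metric.infDist (y : E) (P j)} := by
        ext y; simp [hS_def, Set.mem_iInter]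
      rw [heq]
      apply (Set.toFinite _).isOpen_biInter
      intro j hj
      exact isOpen_lt ((continuous_infDist_pt (P k)).comp continuous_subtype_val)
        ((continuous_infDist_pt (P j)).comp continuous_subtype_val)
    have hsub : S ⊆ {y : X |
        Metric.infDist (y : E) (P k) ≤ Metric.infDist (y : E) U} := by
      intro y hy
      apply le_infDist_aux hUne
      intro p hp
      obtain ⟨j, hjk, hpj⟩ := hUmem p hp
      exact le_trans (hy j hjk).le (Metric.infDist_le_dist_of_mem hpj)
    exact interior_maximal hsub hopen (fun j hj => h j hj)
end
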